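/- arXiv:1105.4764 — 6 statements merged into one kernel-verified Lean document; each statement's English description precedes it below -/
import Mathlib

section
/- Let T ≥ 2π, N a positive integer, ξ ∈ (0,π), and let a_1,…,a_N, b_1,…,b_N be real numbers. Set u₁(t,ξ) = Σ_{k=1}^N ( a_k cos(kt) + (b_k/k) sin(kt) ) sin(kξ). Then ∫₀^T |u₁(t,ξ)|² dt ≥ π Σ_{k=1}^N ( a_k² + k^{-2} b_k² ) sin²(kξ). -/
open Real intervalIntegral

lemma sinInt (k : ℤ) : ∫ t in (0:ℝ)..(2*π), Real.sin (k*t) = 0 := by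
  rcases eq_or_ne k 0 with h | h
  · simp [h]
  · have hk : (k:ℝ) ≠ 0 := Int.cast_ne_zero.mpr h
    rw [intervalIntegral.integral_comp_mul_left Real.sin hk]
    simp [Real.cos_int_mul_two_pi]

lemma cosInt (k : ℤ) (h : k ≠ 0) : ∫ t in (0:ℝ)..(2*π), Real.cos (k*t) = 0 := by
  have hk : (k:ℝ) ≠ 0 := Int.cast_ne_zero.mpr h
  rw [intervalIntegral.integral_comp_mul_left Real.cos hk]
  have h2 : Real.sin ((k:ℝ) * (2*π)) = 0 := by
    have e : (k:ℝ) * (2*π) = ((2*k : ℤ):ℝ) * π := by push_cast; ring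
    rw [e, Real.sin_int_mul_pi]
  simp [h2]

lemma intg (c : ℝ) : IntervalIntegrable (fun t => Real.cos (c*t)) MeasureTheory.volume 0 (2*π) :=
  (Real.continuous_cos.comp (continuous_const.mul continuous_id)).intervalIntegrable _ _

lemma intgs (c : ℝ) : IntervalIntegrable (fun t => Real.sin (c*t)) MeasureTheory.volume 0 (2*π) :=
  (Real.continuous_sin.comp (continuous_const.mul continuous_id)).intervalIntegrable _ _

lemma cosIntSub (k m : ℕ) :
    ∫ t in (0:ℝ)..(2*π), Real.cos (((k:ℝ)-m)*t) = if k = m then 2*π else 0 := by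
  rcases eq_or_ne k m with h | h
  · simp [h]
  · have h1 := cosInt ((k:ℤ)-m) (by omega)
    push_cast at h1
    simp [h1, h]

lemma cosIntAdd (k m : ℕ) (hk : k ≠ 0) :
    ∫ t in (0:ℝ)..(2*π), Real.cos (((k:ℝ)+m)*t) = 0 := by
  have h1 := cosInt ((k:ℤ)+m) (by omega)
  push_cast at h1
  exact h1

lemma sinIntR (k m : ℕ) : (∫ t in (0:ℝ)..(2*π), Real.sin (((k:ℝ)-m)*t)) = 0 ∧
    (∫ t in (0:ℝ)..(2*π), Real.sin (((k:ℝ)+m)*t)) = 0 := by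
  have h1 := sinInt ((k:ℤ)-m)
  have h2 := sinInt ((k:ℤ)+m)
  push_cast at h1 h2
  exact ⟨h1, h2⟩

lemma ccInt (k m : ℕ) (hk : k ≠ 0) (hm : m ≠ 0) :
    ∫ t in (0:ℝ)..(2*π), Real.cos (k*t) * Real.cos (m*t) = if k = m then π else 0 := by
  have key : ∀ t:ℝ, Real.cos (k*t) * Real.cos (m*t)
      = (Real.cos (((k:ℝ)-m)*t) + Real.cos (((k:ℝ)+m)*t))/2 := by
    intro t
    rw [sub_mul, add_mul, Real.cos_sub, Real.cos_add]
    ring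
  rw [intervalIntegral.integral_congr (g := fun t =>
      (Real.cos (((k:ℝ)-m)*t) + Real.cos (((k:ℝ)+m)*t))/2) (fun t _ => key t),
    intervalIntegral.integral_div, intervalIntegral.integral_add (intg _) (intg _),
    cosIntSub, cosIntAdd k m hk]
  rcases eq_or_ne k m with h | h <;> simp [h] <;> ring

lemma ssInt (k m : ℕ) (hk : k ≠ 0) (hm : m ≠ 0) :
    ∫ t in (0:ℝ)..(2*π), Real.sin (k*t) * Real.sin (m*t) = if k = m then π else 0 := by
  have key : ∀ t:ℝ, Real.sin (k*t) * Real.sin (m*t)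
      = (Real.cos (((k:ℝ)-m)*t) - Real.cos (((k:ℝ)+m)*t))/2 := by
    intro t
    rw [sub_mul, add_mul, Real.cos_sub, Real.cos_add]
    ring
  rw [intervalIntegral.integral_congr (g := fun t =>
      (Real.cos (((k:ℝ)-m)*t) - Real.cos (((k:ℝ)+m)*t))/2) (fun t _ => key t),
    intervalIntegral.integral_div, intervalIntegral.integral_sub (intg _) (intg _),
    cosIntSub, cosIntAdd k m hk]
  rcases eq_or_ne k m with h | h <;> simp [h] <;> ring

lemma scInt (k m : ℕ) :
    ∫ t in (0:ℝ)..(2*π), Real.sin (k*t) * Real.cos (m*t) = 0 := by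
  have key : ∀ t:ℝ, Real.sin (k*t) * Real.cos (m*t)
      = (Real.sin (((k:ℝ)+m)*t) + Real.sin (((k:ℝ)-m)*t))/2 := by
    intro t
    rw [sub_mul, add_mul, Real.sin_sub, Real.sin_add]
    ring
  rw [intervalIntegral.integral_congr (g := fun t =>
      (Real.sin (((k:ℝ)+m)*t) + Real.sin (((k:ℝ)-m)*t))/2) (fun t _ => key t),
    intervalIntegral.integral_div, intervalIntegral.integral_add (intgs _) (intgs _),
    (sinIntR k m).1, (sinIntR k m).2]
  norm_num

lemma pairInt (k m : ℕ) (hk : k ≠ 0) (hm : m ≠ 0) (A B C D : ℝ) :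
    ∫ t in (0:ℝ)..(2*π),
        (A * Real.cos (k*t) + B * Real.sin (k*t)) * (C * Real.cos (m*t) + D * Real.sin (m*t))
      = if k = m then π * (A*C + B*D) else 0 := by
  have key : ∀ t:ℝ, (A * Real.cos (k*t) + B * Real.sin (k*t)) *
        (C * Real.cos (m*t) + D * Real.sin (m*t))
      = A*C*(Real.cos (k*t) * Real.cos (m*t)) + A*D*(Real.sin (m*t) * Real.cos (k*t))
        + B*C*(Real.sin (k*t) * Real.cos (m*t)) + B*D*(Real.sin (k*t) * Real.sin (m*t)) := by
    intro t; ring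
  have i1 : IntervalIntegrable (fun t => A*C*(Real.cos (k*t) * Real.cos (m*t)))
      MeasureTheory.volume 0 (2*π) := (by fun_prop : Continuous _).intervalIntegrable _ _
  have i2 : IntervalIntegrable (fun t => A*D*(Real.sin (m*t) * Real.cos (k*t)))
      MeasureTheory.volume 0 (2*π) := (by fun_prop : Continuous _).intervalIntegrable _ _
  have i3 : IntervalIntegrable (fun t => B*C*(Real.sin (k*t) * Real.cos (m*t)))
      MeasureTheory.volume 0 (2*π) := (by fun_prop : Continuous _).intervalIntegrable _ _
  have i4 : IntervalIntegrable (fun t => B*D*(Real.sin (k*t) * Real.sin (m*t)))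
      MeasureTheory.volume 0 (2*π) := (by fun_prop : Continuous _).intervalIntegrable _ _
  rw [intervalIntegral.integral_congr (g := fun t =>
      A*C*(Real.cos (k*t) * Real.cos (m*t)) + A*D*(Real.sin (m*t) * Real.cos (k*t))
        + B*C*(Real.sin (k*t) * Real.cos (m*t)) + B*D*(Real.sin (k*t) * Real.sin (m*t)))
      (fun t _ => key t),
    intervalIntegral.integral_add ((i1.add i2).add i3) i4,
    intervalIntegral.integral_add (i1.add i2) i3,
    intervalIntegral.integral_add i1 i2,
    intervalIntegral.integral_const_mul, intervalIntegral.integral_const_mul,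
    intervalIntegral.integral_const_mul, intervalIntegral.integral_const_mul,
    ccInt k m hk hm, ssInt k m hk hm, scInt m k, scInt k m]
  rcases eq_or_ne k m with h | h <;> simp [h] <;> ring

/-- Observability (lower) estimate for the string trace with observation time `T ≥ 2π`:
`∫₀^T |u₁(t,ξ)|² dt ≥ π Σ (aₖ² + k⁻² bₖ²) sin²(kξ)`. -/
theorem stmt_4 (T : ℝ) (hT : 2 * Real.pi ≤ T) (N : ℕ) (hN : 0 < N)
    (ξ : ℝ) (hξ : ξ ∈ Set.Ioo (0 : ℝ) Real.pi) (a b : ℕ → ℝ) :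
    Real.pi * ∑ k ∈ Finset.Icc 1 N,
        (a k ^ 2 + ((k : ℝ) ^ 2)⁻¹ * b k ^ 2) * Real.sin ((k : ℝ) * ξ) ^ 2
      ≤ ∫ t in (0 : ℝ)..T,
          (∑ k ∈ Finset.Icc 1 N,
            (a k * Real.cos ((k : ℝ) * t) + b k / (k : ℝ) * Real.sin ((k : ℝ) * t))
              * Real.sin ((k : ℝ) * ξ)) ^ 2 := by
  set f : ℝ → ℝ := fun t => ∑ k ∈ Finset.Icc 1 N,
      (a k * Real.cos ((k : ℝ) * t) + b k / (k : ℝ) * Real.sin ((k : ℝ) * t))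
        * Real.sin ((k : ℝ) * ξ) with hf
  have hcont : Continuous f := by
    apply continuous_finset_sum
    intro k _
    fun_prop
  have hci : ∀ u v : ℝ, IntervalIntegrable (fun t => f t ^ 2) MeasureTheory.volume u v :=
    fun u v => (hcont.pow 2).intervalIntegrable u v
  have hsplit : (∫ t in (0:ℝ)..T, f t ^ 2)
      = (∫ t in (0:ℝ)..(2*π), f t ^ 2) + ∫ t in (2*π)..T, f t ^ 2 :=
    (intervalIntegral.integral_add_adjacent_intervals (hci _ _) (hci _ _)).symm
  have htail : 0 ≤ ∫ t in (2*π)..T, f t ^ 2 :=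
    intervalIntegral.integral_nonneg hT (fun t _ => sq_nonneg _)
  have hmain : (∫ t in (0:ℝ)..(2*π), f t ^ 2)
      = π * ∑ k ∈ Finset.Icc 1 N,
        (a k ^ 2 + ((k : ℝ) ^ 2)⁻¹ * b k ^ 2) * Real.sin ((k : ℝ) * ξ) ^ 2 := by
    have expand : ∀ t : ℝ, f t ^ 2 = ∑ k ∈ Finset.Icc 1 N, ∑ m ∈ Finset.Icc 1 N,
        ((a k * Real.sin ((k:ℝ)*ξ)) * Real.cos ((k:ℝ)*t)
            + (b k / k * Real.sin ((k:ℝ)*ξ)) * Real.sin ((k:ℝ)*t))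
          * ((a m * Real.sin ((m:ℝ)*ξ)) * Real.cos ((m:ℝ)*t)
            + (b m / m * Real.sin ((m:ℝ)*ξ)) * Real.sin ((m:ℝ)*t)) := by
      intro t
      rw [hf]
      simp only [sq, Finset.sum_mul_sum]
      apply Finset.sum_congr rfl
      intro k _
      apply Finset.sum_congr rfl
      intro m _
      ring
    rw [intervalIntegral.integral_congr (g := fun t => ∑ k ∈ Finset.Icc 1 N,
        ∑ m ∈ Finset.Icc 1 N,
        ((a k * Real.sin ((k:ℝ)*ξ)) * Real.cos ((k:ℝ)*t)
            + (b k / k * Real.sin ((k:ℝ)*ξ)) * Real.sin ((k:ℝ)*t))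
          * ((a m * Real.sin ((m:ℝ)*ξ)) * Real.cos ((m:ℝ)*t)
            + (b m / m * Real.sin ((m:ℝ)*ξ)) * Real.sin ((m:ℝ)*t)))
        (fun t _ => expand t)]
    rw [intervalIntegral.integral_finset_sum (fun k _ =>
      Continuous.intervalIntegrable (by exact continuous_finset_sum _ (fun m _ => by fun_prop)) _ _)]
    have inner : ∀ k ∈ Finset.Icc 1 N, (∫ t in (0:ℝ)..(2*π), ∑ m ∈ Finset.Icc 1 N,
        ((a k * Real.sin ((k:ℝ)*ξ)) * Real.cos ((k:ℝ)*t)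
            + (b k / k * Real.sin ((k:ℝ)*ξ)) * Real.sin ((k:ℝ)*t))
          * ((a m * Real.sin ((m:ℝ)*ξ)) * Real.cos ((m:ℝ)*t)
            + (b m / m * Real.sin ((m:ℝ)*ξ)) * Real.sin ((m:ℝ)*t)))
        = π * ((a k * Real.sin ((k:ℝ)*ξ))^2 + (b k / k * Real.sin ((k:ℝ)*ξ))^2) := by
      intro k hk
      rw [Finset.mem_Icc] at hk
      rw [intervalIntegral.integral_finset_sum (fun m _ =>
        Continuous.intervalIntegrable (by fun_prop) _ _)]
      have step : ∀ m ∈ Finset.Icc 1 N, (∫ t in (0:ℝ)..(2*π),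
          ((a k * Real.sin ((k:ℝ)*ξ)) * Real.cos ((k:ℝ)*t)
              + (b k / k * Real.sin ((k:ℝ)*ξ)) * Real.sin ((k:ℝ)*t))
            * ((a m * Real.sin ((m:ℝ)*ξ)) * Real.cos ((m:ℝ)*t)
              + (b m / m * Real.sin ((m:ℝ)*ξ)) * Real.sin ((m:ℝ)*t)))
          = if k = m then π * ((a k * Real.sin ((k:ℝ)*ξ)) * (a m * Real.sin ((m:ℝ)*ξ))
              + (b k / k * Real.sin ((k:ℝ)*ξ)) * (b m / m * Real.sin ((m:ℝ)*ξ))) else 0 := by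
        intro m hm
        rw [Finset.mem_Icc] at hm
        exact pairInt k m (by omega) (by omega) _ _ _ _
      rw [Finset.sum_congr rfl step, Finset.sum_ite_eq (Finset.Icc 1 N) k,
        if_pos (Finset.mem_Icc.mpr hk)]
      ring
    rw [Finset.sum_congr rfl inner, Finset.mul_sum]
    apply Finset.sum_congr rfl
    intro k hk
    rw [Finset.mem_Icc] at hk
    have hk0 : (k:ℝ) ≠ 0 := Nat.cast_ne_zero.mpr (by omega)
    have e : (b k / (k:ℝ) * Real.sin ((k:ℝ)*ξ))^2
        = ((k:ℝ)^2)⁻¹ * b k ^2 * Real.sin ((k:ℝ)*ξ)^2 := by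
      rw [mul_pow, div_pow, div_eq_mul_inv, mul_comm (b k ^2)]
    rw [e]
    ring
  rw [hsplit, hmain]
  linarith
end

section
/- Let T ≥ 2π, N a positive integer, η ∈ (0,π), and let α_1,…,α_N, β_1,…,β_N be real numbers. Set u₂(t,η) = Σ_{k=1}^N ( α_k cos(k²t) + (β_k/k²) sin(k²t) ) sin(kη). Then ∫₀^T |u₂(t,η)|² dt ≥ π Σ_{k=1}^N ( α_k² + k^{-4} β_k² ) sin²(kη). -/
open Real intervalIntegral Finset

lemma int_cosZ (j : ℤ) : ∫ t in (0:ℝ)..(2*π), Real.cos (j*t) = if j = 0 then 2*π else 0 := by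
  rcases eq_or_ne j 0 with h|h
  · simp [h, two_mul, pi_nonneg]
  · rw [if_neg h]
    have hj : (j:ℝ) ≠ 0 := Int.cast_ne_zero.mpr h
    have hs : Real.sin ((j:ℝ)*(2*π)) = 0 := by
      rw [show (j:ℝ)*(2*π) = ((2*j:ℤ):ℝ)*π by push_cast; ring, Real.sin_int_mul_pi]
    rw [show (fun t => Real.cos (j*t)) = fun t => Real.cos ((j:ℝ)*t) from rfl]
    rw [intervalIntegral.integral_comp_mul_left Real.cos hj]
    simp [integral_cos, hs]

lemma int_sinZ (j : ℤ) : ∫ t in (0:ℝ)..(2*π), Real.sin (j*t) = 0 := by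
  rcases eq_or_ne j 0 with h|h
  · simp [h]
  · have hj : (j:ℝ) ≠ 0 := Int.cast_ne_zero.mpr h
    have hc : Real.cos ((j:ℝ)*(2*π)) = 1 := by
      rw [show ((j:ℝ)*(2*π)) = ((j:ℤ):ℝ)*(2*π) by push_cast; ring, Real.cos_int_mul_two_pi]
    rw [show (fun t => Real.sin (j*t)) = fun t => Real.sin ((j:ℝ)*t) from rfl]
    rw [intervalIntegral.integral_comp_mul_left Real.sin hj]
    simp [integral_sin, hc]

lemma int_coscos (m n : ℤ) (hm : 0 < m) (hn : 0 < n) :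
    ∫ t in (0:ℝ)..(2*π), Real.cos (m*t) * Real.cos (n*t) = if m = n then π else 0 := by
  have key : ∀ t : ℝ, Real.cos (m*t) * Real.cos (n*t)
      = (Real.cos (((m-n:ℤ):ℝ)*t) + Real.cos (((m+n:ℤ):ℝ)*t))/2 := by
    intro t
    have h1 := Real.cos_sub ((m:ℝ)*t) ((n:ℝ)*t)
    have h2 := Real.cos_add ((m:ℝ)*t) ((n:ℝ)*t)
    push_cast [sub_mul, add_mul]
    linarith
  simp_rw [key]
  rw [intervalIntegral.integral_div, intervalIntegral.integral_add
    ((by continuity : Continuous fun t:ℝ => Real.cos (_*t)).intervalIntegrable 0 (2*π))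
    ((by continuity : Continuous fun t:ℝ => Real.cos (_*t)).intervalIntegrable 0 (2*π))]
  rw [int_cosZ (m-n), int_cosZ (m+n)]
  rcases eq_or_ne m n with h|h
  · subst h
    rw [if_neg (by omega : ¬ m + m = 0), if_pos (by omega : m - m = 0), if_pos rfl]
    ring
  · rw [if_neg (by omega : ¬ m + n = 0), if_neg (sub_ne_zero.mpr h), if_neg h]
    ring

lemma int_sinsin (m n : ℤ) (hm : 0 < m) (hn : 0 < n) :
    ∫ t in (0:ℝ)..(2*π), Real.sin (m*t) * Real.sin (n*t) = if m = n then π else 0 := by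
  have key : ∀ t : ℝ, Real.sin (m*t) * Real.sin (n*t)
      = (Real.cos (((m-n:ℤ):ℝ)*t) - Real.cos (((m+n:ℤ):ℝ)*t))/2 := by
    intro t
    have h1 := Real.cos_sub ((m:ℝ)*t) ((n:ℝ)*t)
    have h2 := Real.cos_add ((m:ℝ)*t) ((n:ℝ)*t)
    push_cast [sub_mul, add_mul]
    linarith
  simp_rw [key]
  rw [intervalIntegral.integral_div, intervalIntegral.integral_sub
    ((by continuity : Continuous fun t:ℝ => Real.cos (_*t)).intervalIntegrable 0 (2*π))
    ((by continuity : Continuous fun t:ℝ => Real.cos (_*t)).intervalIntegrable 0 (2*π))]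
  rw [int_cosZ (m-n), int_cosZ (m+n)]
  rcases eq_or_ne m n with h|h
  · subst h
    rw [if_neg (by omega : ¬ m + m = 0), if_pos (by omega : m - m = 0), if_pos rfl]
    ring
  · rw [if_neg (by omega : ¬ m + n = 0), if_neg (sub_ne_zero.mpr h), if_neg h]
    ring

lemma int_sincos (m n : ℤ) :
    ∫ t in (0:ℝ)..(2*π), Real.sin (m*t) * Real.cos (n*t) = 0 := by
  have key : ∀ t : ℝ, Real.sin (m*t) * Real.cos (n*t)
      = (Real.sin (((m+n:ℤ):ℝ)*t) + Real.sin (((m-n:ℤ):ℝ)*t))/2 := by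
    intro t
    have h1 := Real.sin_add ((m:ℝ)*t) ((n:ℝ)*t)
    have h2 := Real.sin_sub ((m:ℝ)*t) ((n:ℝ)*t)
    push_cast [sub_mul, add_mul]
    linarith
  simp_rw [key]
  rw [intervalIntegral.integral_div, intervalIntegral.integral_add
    ((by continuity : Continuous fun t:ℝ => Real.sin (_*t)).intervalIntegrable 0 (2*π))
    ((by continuity : Continuous fun t:ℝ => Real.sin (_*t)).intervalIntegrable 0 (2*π))]
  rw [int_sinZ, int_sinZ]
  norm_num

lemma pair (k l : ℕ) (hk : 1 ≤ k) (hl : 1 ≤ l) (a b c d : ℝ) :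
    ∫ t in (0:ℝ)..(2*π),
      (a * Real.cos ((k:ℝ)^2*t) + b * Real.sin ((k:ℝ)^2*t)) *
      (c * Real.cos ((l:ℝ)^2*t) + d * Real.sin ((l:ℝ)^2*t))
      = if k = l then π*(a*c + b*d) else 0 := by
  have hM : ((k:ℝ)^2) = (((k:ℤ)^2 : ℤ) : ℝ) := by push_cast; ring
  have hL : ((l:ℝ)^2) = (((l:ℤ)^2 : ℤ) : ℝ) := by push_cast; ring
  set M : ℤ := (k:ℤ)^2 with hMdef
  set L : ℤ := (l:ℤ)^2 with hLdef
  have expand : ∀ t : ℝ,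
      (a * Real.cos ((k:ℝ)^2*t) + b * Real.sin ((k:ℝ)^2*t)) *
      (c * Real.cos ((l:ℝ)^2*t) + d * Real.sin ((l:ℝ)^2*t))
      = a*c*(Real.cos ((M:ℝ)*t)*Real.cos ((L:ℝ)*t)) + b*d*(Real.sin ((M:ℝ)*t)*Real.sin ((L:ℝ)*t))
        + (b*c*(Real.sin ((M:ℝ)*t)*Real.cos ((L:ℝ)*t)) + a*d*(Real.sin ((L:ℝ)*t)*Real.cos ((M:ℝ)*t))) := by
    intro t; rw [hM, hL]; ring
  simp_rw [expand]
  have i1 : IntervalIntegrable (fun t => a*c*(Real.cos ((M:ℝ)*t)*Real.cos ((L:ℝ)*t)))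
      MeasureTheory.volume 0 (2*π) := (Continuous.intervalIntegrable (by fun_prop) 0 (2*π))
  have i2 : IntervalIntegrable (fun t => b*d*(Real.sin ((M:ℝ)*t)*Real.sin ((L:ℝ)*t)))
      MeasureTheory.volume 0 (2*π) := (Continuous.intervalIntegrable (by fun_prop) 0 (2*π))
  have i3 : IntervalIntegrable (fun t => b*c*(Real.sin ((M:ℝ)*t)*Real.cos ((L:ℝ)*t)))
      MeasureTheory.volume 0 (2*π) := (Continuous.intervalIntegrable (by fun_prop) 0 (2*π))
  have i4 : IntervalIntegrable (fun t => a*d*(Real.sin ((L:ℝ)*t)*Real.cos ((M:ℝ)*t)))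
      MeasureTheory.volume 0 (2*π) := (Continuous.intervalIntegrable (by fun_prop) 0 (2*π))
  rw [intervalIntegral.integral_add (i1.add i2) (i3.add i4),
      intervalIntegral.integral_add i1 i2, intervalIntegral.integral_add i3 i4,
      intervalIntegral.integral_const_mul, intervalIntegral.integral_const_mul,
      intervalIntegral.integral_const_mul, intervalIntegral.integral_const_mul]
  have hMpos : 0 < M := by have h1 : (1:ℤ) ≤ (k:ℤ) := by exact_mod_cast hk
                           nlinarith
  have hLpos : 0 < L := by have h1 : (1:ℤ) ≤ (l:ℤ) := by exact_mod_cast hl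
                           nlinarith
  rw [int_coscos M L hMpos hLpos, int_sinsin M L hMpos hLpos, int_sincos, int_sincos]
  have hiff : (M = L) ↔ (k = l) := by
    constructor
    · intro h
      have : (k:ℤ) = l := by nlinarith [sq_nonneg ((k:ℤ) - l), sq_nonneg ((k:ℤ) + l),
        (by exact_mod_cast hk : (1:ℤ) ≤ k), (by exact_mod_cast hl : (1:ℤ) ≤ l)]
      exact_mod_cast this
    · intro h; simp [hMdef, hLdef, h]
  rcases eq_or_ne k l with h|h
  · rw [if_pos (hiff.mpr h), if_pos h]; ring
  · rw [if_neg (fun hh => h (hiff.mp hh)), if_neg h]; ring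

/-- Observability (lower) estimate for the beam trace with observation time `T ≥ 2π`:
`∫₀^T |u₂(t,η)|² dt ≥ π Σ (αₖ² + k⁻⁴ βₖ²) sin²(kη)`. -/
theorem stmt_6 (T : ℝ) (hT : 2 * Real.pi ≤ T) (N : ℕ) (hN : 0 < N)
    (η : ℝ) (hη : η ∈ Set.Ioo (0 : ℝ) Real.pi) (α β : ℕ → ℝ) :
    Real.pi * ∑ k ∈ Finset.Icc 1 N,
        (α k ^ 2 + ((k : ℝ) ^ 4)⁻¹ * β k ^ 2) * Real.sin ((k : ℝ) * η) ^ 2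
      ≤ ∫ t in (0 : ℝ)..T,
          (∑ k ∈ Finset.Icc 1 N,
            (α k * Real.cos ((k : ℝ) ^ 2 * t) + β k / (k : ℝ) ^ 2 * Real.sin ((k : ℝ) ^ 2 * t))
              * Real.sin ((k : ℝ) * η)) ^ 2 := by
  have hgc : ∀ k : ℕ, Continuous (fun t : ℝ =>
      (α k * Real.cos ((k : ℝ) ^ 2 * t) + β k / (k : ℝ) ^ 2 * Real.sin ((k : ℝ) ^ 2 * t))
        * Real.sin ((k : ℝ) * η)) := fun k => by fun_prop
  have hfc : Continuous (fun t : ℝ => ∑ k ∈ Finset.Icc 1 N,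
      (α k * Real.cos ((k : ℝ) ^ 2 * t) + β k / (k : ℝ) ^ 2 * Real.sin ((k : ℝ) ^ 2 * t))
        * Real.sin ((k : ℝ) * η)) := continuous_finset_sum _ (fun k _ => hgc k)
  have hsq : Continuous (fun t : ℝ => (∑ k ∈ Finset.Icc 1 N,
      (α k * Real.cos ((k : ℝ) ^ 2 * t) + β k / (k : ℝ) ^ 2 * Real.sin ((k : ℝ) ^ 2 * t))
        * Real.sin ((k : ℝ) * η)) ^ 2) := hfc.pow 2
  -- exact value on [0, 2π]
  have key : (∫ t in (0:ℝ)..(2*π), (∑ k ∈ Finset.Icc 1 N,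
      (α k * Real.cos ((k : ℝ) ^ 2 * t) + β k / (k : ℝ) ^ 2 * Real.sin ((k : ℝ) ^ 2 * t))
        * Real.sin ((k : ℝ) * η)) ^ 2)
      = π * ∑ k ∈ Finset.Icc 1 N,
        (α k ^ 2 + ((k : ℝ) ^ 4)⁻¹ * β k ^ 2) * Real.sin ((k : ℝ) * η) ^ 2 := by
    have expand : ∀ t : ℝ, (∑ k ∈ Finset.Icc 1 N,
        (α k * Real.cos ((k : ℝ) ^ 2 * t) + β k / (k : ℝ) ^ 2 * Real.sin ((k : ℝ) ^ 2 * t))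
          * Real.sin ((k : ℝ) * η)) ^ 2
        = ∑ k ∈ Finset.Icc 1 N, ∑ l ∈ Finset.Icc 1 N,
            ((α k * Real.sin ((k:ℝ)*η)) * Real.cos ((k:ℝ)^2*t)
              + (β k / (k:ℝ)^2 * Real.sin ((k:ℝ)*η)) * Real.sin ((k:ℝ)^2*t))
            * ((α l * Real.sin ((l:ℝ)*η)) * Real.cos ((l:ℝ)^2*t)
              + (β l / (l:ℝ)^2 * Real.sin ((l:ℝ)*η)) * Real.sin ((l:ℝ)^2*t)) := by
      intro t
      rw [sq, Finset.sum_mul_sum]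
      exact Finset.sum_congr rfl fun k _ => Finset.sum_congr rfl fun l _ => by ring
    simp_rw [expand]
    rw [intervalIntegral.integral_finset_sum (fun k _ =>
      Continuous.intervalIntegrable (by fun_prop) 0 (2*π))]
    have inner : ∀ k ∈ Finset.Icc 1 N,
        (∫ t in (0:ℝ)..(2*π), ∑ l ∈ Finset.Icc 1 N,
            ((α k * Real.sin ((k:ℝ)*η)) * Real.cos ((k:ℝ)^2*t)
              + (β k / (k:ℝ)^2 * Real.sin ((k:ℝ)*η)) * Real.sin ((k:ℝ)^2*t))
            * ((α l * Real.sin ((l:ℝ)*η)) * Real.cos ((l:ℝ)^2*t)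
              + (β l / (l:ℝ)^2 * Real.sin ((l:ℝ)*η)) * Real.sin ((l:ℝ)^2*t)))
        = π * ((α k * Real.sin ((k:ℝ)*η))^2 + (β k / (k:ℝ)^2 * Real.sin ((k:ℝ)*η))^2) := by
      intro k hk
      rw [intervalIntegral.integral_finset_sum (fun l _ =>
        Continuous.intervalIntegrable (by fun_prop) 0 (2*π))]
      have hk1 : 1 ≤ k := (Finset.mem_Icc.mp hk).1
      have step : ∀ l ∈ Finset.Icc 1 N,
          (∫ t in (0:ℝ)..(2*π),
            ((α k * Real.sin ((k:ℝ)*η)) * Real.cos ((k:ℝ)^2*t)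
              + (β k / (k:ℝ)^2 * Real.sin ((k:ℝ)*η)) * Real.sin ((k:ℝ)^2*t))
            * ((α l * Real.sin ((l:ℝ)*η)) * Real.cos ((l:ℝ)^2*t)
              + (β l / (l:ℝ)^2 * Real.sin ((l:ℝ)*η)) * Real.sin ((l:ℝ)^2*t)))
          = if k = l then π * ((α k * Real.sin ((k:ℝ)*η)) * (α l * Real.sin ((l:ℝ)*η))
              + (β k / (k:ℝ)^2 * Real.sin ((k:ℝ)*η)) * (β l / (l:ℝ)^2 * Real.sin ((l:ℝ)*η))) else 0 := by
        intro l hl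
        exact pair k l hk1 (Finset.mem_Icc.mp hl).1 _ _ _ _
      rw [Finset.sum_congr rfl step, Finset.sum_ite_eq (Finset.Icc 1 N) k
        (fun l => π * ((α k * Real.sin ((k:ℝ)*η)) * (α l * Real.sin ((l:ℝ)*η))
              + (β k / (k:ℝ)^2 * Real.sin ((k:ℝ)*η)) * (β l / (l:ℝ)^2 * Real.sin ((l:ℝ)*η)))),
        if_pos hk]
      ring
    rw [Finset.sum_congr rfl inner, Finset.mul_sum]
    refine Finset.sum_congr rfl fun k hk => ?_
    have hk0 : (k:ℝ) ≠ 0 := by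
      have := (Finset.mem_Icc.mp hk).1
      positivity
    field_simp
  -- split [0,T] = [0,2π] ∪ [2π,T]
  have i1 : IntervalIntegrable (fun t : ℝ => (∑ k ∈ Finset.Icc 1 N,
      (α k * Real.cos ((k : ℝ) ^ 2 * t) + β k / (k : ℝ) ^ 2 * Real.sin ((k : ℝ) ^ 2 * t))
        * Real.sin ((k : ℝ) * η)) ^ 2) MeasureTheory.volume 0 (2*π) :=
    hsq.intervalIntegrable 0 (2*π)
  have i2 : IntervalIntegrable (fun t : ℝ => (∑ k ∈ Finset.Icc 1 N,
      (α k * Real.cos ((k : ℝ) ^ 2 * t) + β k / (k : ℝ) ^ 2 * Real.sin ((k : ℝ) ^ 2 * t))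
        * Real.sin ((k : ℝ) * η)) ^ 2) MeasureTheory.volume (2*π) T :=
    hsq.intervalIntegrable (2*π) T
  rw [← intervalIntegral.integral_add_adjacent_intervals i1 i2, key]
  have h2 : 0 ≤ ∫ t in (2*π)..T, (∑ k ∈ Finset.Icc 1 N,
      (α k * Real.cos ((k : ℝ) ^ 2 * t) + β k / (k : ℝ) ^ 2 * Real.sin ((k : ℝ) ^ 2 * t))
        * Real.sin ((k : ℝ) * η)) ^ 2 :=
    intervalIntegral.integral_nonneg hT (fun t _ => sq_nonneg _)
  linarith
end

section
/- Let T > 0, N a positive integer, η ∈ (0,π), and let α_1,…,α_N, β_1,…,β_N be real numbers. Set u₂(t,η) = Σ_{k=1}^N ( α_k cos(k²t) + (β_k/k²) sin(k²t) ) sin(kη). Then ∫₀^T |u₂(t,η)|² dt ≤ π (⌊T/(2π)⌋ + 1) Σ_{k=1}^N ( α_k² + k^{-4} β_k² ) sin²(kη). -/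
open Real MeasureTheory

private lemma beam_int_sin (n : ℤ) : ∫ t in (0:ℝ)..(2*Real.pi), Real.sin (n*t) = 0 := by
  rcases eq_or_ne n 0 with h | h
  · simp [h]
  · have hn : (n:ℝ) ≠ 0 := Int.cast_ne_zero.2 h
    rw [intervalIntegral.integral_comp_mul_left (fun x => Real.sin x) hn]
    simp [integral_sin, Real.cos_int_mul_two_pi]

private lemma beam_int_cos (n : ℤ) (hn : n ≠ 0) :
    ∫ t in (0:ℝ)..(2*Real.pi), Real.cos (n*t) = 0 := by
  have hn' : (n:ℝ) ≠ 0 := Int.cast_ne_zero.2 hn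
  rw [intervalIntegral.integral_comp_mul_left (fun x => Real.cos x) hn']
  have h2 : Real.sin ((n:ℝ) * (2*Real.pi)) = 0 := by
    have : (n:ℝ) * (2*Real.pi) = ((2*n : ℤ):ℝ) * Real.pi := by push_cast; ring
    rw [this, Real.sin_int_mul_pi]
  simp [integral_cos, h2]

private lemma beam_cc (p q : ℤ) (hp : 0 < p) (hq : 0 < q) :
    ∫ t in (0:ℝ)..(2*Real.pi), Real.cos (p*t) * Real.cos (q*t)
      = if p = q then Real.pi else 0 := by
  have key : ∀ t : ℝ, Real.cos ((p:ℝ)*t) * Real.cos ((q:ℝ)*t)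
      = (Real.cos (((p-q : ℤ):ℝ) * t) + Real.cos (((p+q : ℤ):ℝ) * t)) / 2 := by
    intro t
    push_cast
    rw [show ((p:ℝ)-q)*t = (p:ℝ)*t - (q:ℝ)*t by ring,
        show ((p:ℝ)+q)*t = (p:ℝ)*t + (q:ℝ)*t by ring, Real.cos_sub, Real.cos_add]
    ring
  simp only [key]
  rw [intervalIntegral.integral_div,
      intervalIntegral.integral_add (Continuous.intervalIntegrable (by fun_prop) _ _) (Continuous.intervalIntegrable (by fun_prop) _ _)]
  have hpq : p + q ≠ 0 := by omega
  rcases eq_or_ne p q with h | h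
  · subst h
    rw [beam_int_cos _ hpq]
    simp [Real.pi_ne_zero, two_mul]
  · have hsub : p - q ≠ 0 := by omega
    rw [beam_int_cos _ hsub, beam_int_cos _ hpq]
    simp [h]

private lemma beam_ss (p q : ℤ) (hp : 0 < p) (hq : 0 < q) :
    ∫ t in (0:ℝ)..(2*Real.pi), Real.sin (p*t) * Real.sin (q*t)
      = if p = q then Real.pi else 0 := by
  have key : ∀ t : ℝ, Real.sin ((p:ℝ)*t) * Real.sin ((q:ℝ)*t)
      = (Real.cos (((p-q : ℤ):ℝ) * t) - Real.cos (((p+q : ℤ):ℝ) * t)) / 2 := by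
    intro t
    push_cast
    rw [show ((p:ℝ)-q)*t = (p:ℝ)*t - (q:ℝ)*t by ring,
        show ((p:ℝ)+q)*t = (p:ℝ)*t + (q:ℝ)*t by ring, Real.cos_sub, Real.cos_add]
    ring
  simp only [key]
  rw [intervalIntegral.integral_div,
      intervalIntegral.integral_sub (Continuous.intervalIntegrable (by fun_prop) _ _) (Continuous.intervalIntegrable (by fun_prop) _ _)]
  have hpq : p + q ≠ 0 := by omega
  rcases eq_or_ne p q with h | h
  · subst h
    rw [beam_int_cos _ hpq]
    simp [Real.pi_ne_zero, two_mul]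
  · have hsub : p - q ≠ 0 := by omega
    rw [beam_int_cos _ hsub, beam_int_cos _ hpq]
    simp [h]

private lemma beam_sc (p q : ℤ) :
    ∫ t in (0:ℝ)..(2*Real.pi), Real.sin (p*t) * Real.cos (q*t) = 0 := by
  have key : ∀ t : ℝ, Real.sin ((p:ℝ)*t) * Real.cos ((q:ℝ)*t)
      = (Real.sin (((p+q : ℤ):ℝ) * t) + Real.sin (((p-q : ℤ):ℝ) * t)) / 2 := by
    intro t
    push_cast
    rw [show ((p:ℝ)-q)*t = (p:ℝ)*t - (q:ℝ)*t by ring,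
        show ((p:ℝ)+q)*t = (p:ℝ)*t + (q:ℝ)*t by ring, Real.sin_sub, Real.sin_add]
    ring
  simp only [key]
  rw [intervalIntegral.integral_div,
      intervalIntegral.integral_add (Continuous.intervalIntegrable (by fun_prop) _ _) (Continuous.intervalIntegrable (by fun_prop) _ _),
      beam_int_sin, beam_int_sin]
  norm_num

/-- Admissibility (upper, direct) estimate for the beam trace:
`∫₀^T |u₂(t,η)|² dt ≤ π (⌊T/(2π)⌋ + 1) Σ (αₖ² + k⁻⁴ βₖ²) sin²(kη)`. -/
theorem stmt_7 (T : ℝ) (hT : 0 < T) (N : ℕ) (hN : 0 < N)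
    (η : ℝ) (hη : η ∈ Set.Ioo (0 : ℝ) Real.pi) (α β : ℕ → ℝ) :
    ∫ t in (0 : ℝ)..T,
        (∑ k ∈ Finset.Icc 1 N,
          (α k * Real.cos ((k : ℝ) ^ 2 * t) + β k / (k : ℝ) ^ 2 * Real.sin ((k : ℝ) ^ 2 * t))
            * Real.sin ((k : ℝ) * η)) ^ 2
      ≤ Real.pi * ((⌊T / (2 * Real.pi)⌋ : ℝ) + 1) *
          ∑ k ∈ Finset.Icc 1 N,
            (α k ^ 2 + ((k : ℝ) ^ 4)⁻¹ * β k ^ 2) * Real.sin ((k : ℝ) * η) ^ 2 := by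
  have pi_pos := Real.pi_pos
  set g : ℕ → ℝ → ℝ := fun k t =>
    (α k * Real.cos ((k : ℝ) ^ 2 * t) + β k / (k : ℝ) ^ 2 * Real.sin ((k : ℝ) ^ 2 * t))
      * Real.sin ((k : ℝ) * η) with hg
  set f : ℝ → ℝ := fun t => (∑ k ∈ Finset.Icc 1 N, g k t) ^ 2 with hf
  have hgc : ∀ k, Continuous (g k) := by intro k; fun_prop
  have hfc : Continuous f := by fun_prop
  have hInt : ∀ a b : ℝ, IntervalIntegrable f volume a b :=
    fun a b => hfc.intervalIntegrable a b
  have hper : Function.Periodic f (2 * Real.pi) := by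
    intro t
    simp only [hf]
    congr 1
    refine Finset.sum_congr rfl fun k _ => ?_
    have h1 : (k : ℝ) ^ 2 * (t + 2 * Real.pi)
        = (k : ℝ) ^ 2 * t + ((k ^ 2 : ℕ) : ℤ) * (2 * Real.pi) := by push_cast; ring
    simp only [hg, h1, Real.cos_add_int_mul_two_pi, Real.sin_add_int_mul_two_pi]
  set n : ℤ := ⌊T / (2 * Real.pi)⌋ with hn
  -- the per-period integral
  have hbase : ∫ t in (0:ℝ)..(2*Real.pi), f t
      = Real.pi * ∑ k ∈ Finset.Icc 1 N,
          (α k ^ 2 + ((k : ℝ) ^ 4)⁻¹ * β k ^ 2) * Real.sin ((k : ℝ) * η) ^ 2 := by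
    have expand : ∀ t, f t = ∑ j ∈ Finset.Icc 1 N, ∑ k ∈ Finset.Icc 1 N, g j t * g k t := by
      intro t
      simp only [hf]
      rw [sq, Finset.sum_mul_sum]
    have pair : ∀ j ∈ Finset.Icc 1 N, ∀ k ∈ Finset.Icc 1 N,
        ∫ t in (0:ℝ)..(2*Real.pi), g j t * g k t
          = if j = k then
              Real.pi * ((α k ^ 2 + ((k : ℝ) ^ 4)⁻¹ * β k ^ 2) * Real.sin ((k : ℝ) * η) ^ 2)
            else 0 := by
      intro j hj k hk
      have hj1 : 1 ≤ j := (Finset.mem_Icc.1 hj).1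
      have hk1 : 1 ≤ k := (Finset.mem_Icc.1 hk).1
      set p : ℤ := (j : ℤ) ^ 2 with hpdef
      set q : ℤ := (k : ℤ) ^ 2 with hqdef
      have hp : 0 < p := by positivity
      have hq : 0 < q := by positivity
      set Aj := α j * Real.sin ((j : ℝ) * η)
      set Ak := α k * Real.sin ((k : ℝ) * η)
      set Bj := β j / (j : ℝ) ^ 2 * Real.sin ((j : ℝ) * η)
      set Bk := β k / (k : ℝ) ^ 2 * Real.sin ((k : ℝ) * η)
      have key : ∀ t : ℝ, g j t * g k t
          = Aj * Ak * (Real.cos ((p:ℝ)*t) * Real.cos ((q:ℝ)*t))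
            + Bk * Ak * 0
            + Ak * Bj * 0
            + Aj * Bk * (Real.sin ((q:ℝ)*t) * Real.cos ((p:ℝ)*t))
            + Bj * Ak * (Real.sin ((p:ℝ)*t) * Real.cos ((q:ℝ)*t))
            + Bj * Bk * (Real.sin ((p:ℝ)*t) * Real.sin ((q:ℝ)*t)) := by
        intro t
        simp only [hg, Aj, Ak, Bj, Bk, hpdef, hqdef]
        push_cast
        ring
      simp only [key]
      rw [intervalIntegral.integral_add (Continuous.intervalIntegrable (by fun_prop) _ _) (Continuous.intervalIntegrable (by fun_prop) _ _),
          intervalIntegral.integral_add (Continuous.intervalIntegrable (by fun_prop) _ _) (Continuous.intervalIntegrable (by fun_prop) _ _),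
          intervalIntegral.integral_add (Continuous.intervalIntegrable (by fun_prop) _ _) (Continuous.intervalIntegrable (by fun_prop) _ _),
          intervalIntegral.integral_add (Continuous.intervalIntegrable (by fun_prop) _ _) (Continuous.intervalIntegrable (by fun_prop) _ _),
          intervalIntegral.integral_add (Continuous.intervalIntegrable (by fun_prop) _ _) (Continuous.intervalIntegrable (by fun_prop) _ _),
          intervalIntegral.integral_const_mul, intervalIntegral.integral_const_mul,
          intervalIntegral.integral_const_mul, intervalIntegral.integral_const_mul,
          intervalIntegral.integral_const_mul, intervalIntegral.integral_const_mul,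
          beam_cc p q hp hq, beam_ss p q hp hq, beam_sc q p, beam_sc p q]
      have hiff : p = q ↔ j = k := by
        constructor
        · intro h
          have : (j:ℤ) = (k:ℤ) := by nlinarith [hp, hq]
          exact_mod_cast this
        · intro h; simp [hpdef, hqdef, h]
      rcases eq_or_ne j k with h | h
      · subst h
        simp only [hiff.2 rfl, if_pos rfl, if_pos (Eq.refl j), ↓reduceIte]
        have hj0 : (j:ℝ) ≠ 0 := by positivity
        simp only [Aj, Ak, Bj, Bk, mul_zero, intervalIntegral.integral_zero]
        field_simp
        ring
      · rw [if_neg (fun hpq => h (hiff.1 hpq)), if_neg h]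
        simp
    rw [intervalIntegral.integral_congr (g := fun t =>
        ∑ j ∈ Finset.Icc 1 N, ∑ k ∈ Finset.Icc 1 N, g j t * g k t)
        (fun t _ => expand t)]
    rw [intervalIntegral.integral_finset_sum (fun j _ => Continuous.intervalIntegrable (by fun_prop) _ _)]
    have : ∀ j ∈ Finset.Icc 1 N,
        (∫ t in (0:ℝ)..(2*Real.pi), ∑ k ∈ Finset.Icc 1 N, g j t * g k t)
        = Real.pi * ((α j ^ 2 + ((j : ℝ) ^ 4)⁻¹ * β j ^ 2) * Real.sin ((j : ℝ) * η) ^ 2) := by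
      intro j hj
      rw [intervalIntegral.integral_finset_sum (fun k _ => Continuous.intervalIntegrable (by fun_prop) _ _)]
      rw [Finset.sum_congr rfl (fun k hk => pair j hj k hk)]
      simp [Finset.sum_ite_eq, hj]
    rw [Finset.sum_congr rfl this, ← Finset.mul_sum]
  -- periodic extension
  have hTd : T ≤ 0 + (n + 1) • (2 * Real.pi) := by
    have h1 : T / (2 * Real.pi) < (n : ℝ) + 1 := Int.lt_floor_add_one _
    have h2 : T < ((n : ℝ) + 1) * (2 * Real.pi) := by
      rw [div_lt_iff₀ (by positivity)] at h1; linarith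
    have : (n + 1) • (2 * Real.pi) = ((n : ℝ) + 1) * (2 * Real.pi) := by
      rw [zsmul_eq_mul]; push_cast; ring
    rw [this]; linarith
  have hmono : ∫ t in (0:ℝ)..T, f t ≤ ∫ t in (0:ℝ)..(0 + (n + 1) • (2 * Real.pi)), f t := by
    apply intervalIntegral.integral_mono_interval le_rfl hT.le hTd
    · exact Filter.Eventually.of_forall fun t => sq_nonneg _
    · exact hInt _ _
  have hext : ∫ t in (0:ℝ)..(0 + (n + 1) • (2 * Real.pi)), f t
      = ((n : ℝ) + 1) * ∫ t in (0:ℝ)..(2*Real.pi), f t := by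
    rw [hper.intervalIntegral_add_zsmul_eq (n + 1) 0 hInt]
    rw [zsmul_eq_mul, zero_add]
    push_cast; ring
  calc ∫ t in (0:ℝ)..T, f t
      ≤ ∫ t in (0:ℝ)..(0 + (n + 1) • (2 * Real.pi)), f t := hmono
    _ = ((n : ℝ) + 1) * ∫ t in (0:ℝ)..(2*Real.pi), f t := hext
    _ = Real.pi * ((n : ℝ) + 1) * ∑ k ∈ Finset.Icc 1 N,
          (α k ^ 2 + ((k : ℝ) ^ 4)⁻¹ * β k ^ 2) * Real.sin ((k : ℝ) * η) ^ 2 := by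
        rw [hbase]; ring
end

section
/- Let T > 2π and ξ, η ∈ (0,π). There exist constants c₁ > 0 and c₂ > 0, depending only on T, such that for every positive integer N and all real numbers a_k, b_k, α_k, β_k (1 ≤ k ≤ N), setting u₁(t,x) = Σ_{k=1}^N ( a_k cos(kt) + (b_k/k) sin(kt) ) sin(kx) and u₂(t,x) = Σ_{k=1}^N ( α_k cos(k²t) + (β_k/k²) sin(k²t) ) sin(kx) and E = Σ_{k=1}^N ( a_k² + k^{-2} b_k² ) sin²(kξ) + Σ_{k=1}^N ( α_k² + k^{-4} β_k² ) sin²(kη), one has c₁ E ≤ ∫₀^T ( |u₁(t,ξ)|² + |u₂(t,η)|² ) dt ≤ c₂ E. -/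
open Real intervalIntegral

lemma intCos (c : ℤ) : ∫ x in (0:ℝ)..(2*π), Real.cos (c * x) = if c = 0 then 2*π else 0 := by
  by_cases hc : c = 0
  · simp [hc, two_pi_pos.le]
  · have h : (c:ℝ) ≠ 0 := Int.cast_ne_zero.mpr hc
    rw [if_neg hc, intervalIntegral.integral_comp_mul_left Real.cos h, integral_cos]
    have : Real.sin ((c:ℝ) * (2*π)) = 0 := by
      rw [show (c:ℝ) * (2*π) = (2*c : ℤ) * π by push_cast; ring]
      exact Real.sin_int_mul_pi (2*c)
    simp [this]

lemma intSin (c : ℤ) : ∫ x in (0:ℝ)..(2*π), Real.sin (c * x) = 0 := by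
  by_cases hc : c = 0
  · simp [hc]
  · have h : (c:ℝ) ≠ 0 := Int.cast_ne_zero.mpr hc
    rw [intervalIntegral.integral_comp_mul_left Real.sin h, integral_sin]
    have : Real.cos ((c:ℝ) * (2*π)) = 1 := by
      rw [show (c:ℝ) * (2*π) = (c:ℤ) * (2*π) by norm_num]
      exact Real.cos_int_mul_two_pi c
    simp [this]

lemma contCos (c : ℝ) : Continuous fun t : ℝ => Real.cos (c*t) := by fun_prop
lemma contSin (c : ℝ) : Continuous fun t : ℝ => Real.sin (c*t) := by fun_prop

lemma cosCos (n m : ℕ) (hn : 0 < n) (hm : 0 < m) :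
    ∫ t in (0:ℝ)..(2*π), Real.cos (n*t) * Real.cos (m*t) = if n = m then π else 0 := by
  have key : ∀ t:ℝ, Real.cos (n*t) * Real.cos (m*t)
      = (Real.cos (((n - m : ℤ):ℝ)*t) + Real.cos (((n + m : ℤ):ℝ)*t))/2 := by
    intro t; push_cast; rw [sub_mul, add_mul, Real.cos_sub, Real.cos_add]; ring
  rw [intervalIntegral.integral_congr (fun t _ => key t), intervalIntegral.integral_div,
    intervalIntegral.integral_add ((contCos _).intervalIntegrable _ _)
      ((contCos _).intervalIntegrable _ _), intCos, intCos]
  have h2 : (n : ℤ) + (m : ℤ) ≠ 0 := by positivity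
  rw [if_neg h2]
  by_cases h : n = m
  · subst h; simp
  · rw [if_neg (by omega), if_neg h]; norm_num

lemma sinSin (n m : ℕ) (hn : 0 < n) (hm : 0 < m) :
    ∫ t in (0:ℝ)..(2*π), Real.sin (n*t) * Real.sin (m*t) = if n = m then π else 0 := by
  have key : ∀ t:ℝ, Real.sin (n*t) * Real.sin (m*t)
      = (Real.cos (((n - m : ℤ):ℝ)*t) - Real.cos (((n + m : ℤ):ℝ)*t))/2 := by
    intro t; push_cast; rw [sub_mul, add_mul, Real.cos_sub, Real.cos_add]; ring
  rw [intervalIntegral.integral_congr (fun t _ => key t), intervalIntegral.integral_div,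
    intervalIntegral.integral_sub ((contCos _).intervalIntegrable _ _)
      ((contCos _).intervalIntegrable _ _), intCos, intCos]
  have h2 : (n : ℤ) + (m : ℤ) ≠ 0 := by positivity
  rw [if_neg h2]
  by_cases h : n = m
  · subst h; simp
  · rw [if_neg (by omega), if_neg h]; norm_num

lemma sinCos (n m : ℕ) :
    ∫ t in (0:ℝ)..(2*π), Real.sin (n*t) * Real.cos (m*t) = 0 := by
  have key : ∀ t:ℝ, Real.sin (n*t) * Real.cos (m*t)
      = (Real.sin (((n + m : ℤ):ℝ)*t) + Real.sin (((n - m : ℤ):ℝ)*t))/2 := by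
    intro t; push_cast; rw [sub_mul, add_mul, Real.sin_sub, Real.sin_add]; ring
  rw [intervalIntegral.integral_congr (fun t _ => key t), intervalIntegral.integral_div,
    intervalIntegral.integral_add ((contSin _).intervalIntegrable _ _)
      ((contSin _).intervalIntegrable _ _), intSin, intSin]
  norm_num

lemma prodInt (n m : ℕ) (hn : 0 < n) (hm : 0 < m) (A₁ B₁ A₂ B₂ : ℝ) :
    ∫ t in (0:ℝ)..(2*π), (A₁ * Real.cos (n*t) + B₁ * Real.sin (n*t))
        * (A₂ * Real.cos (m*t) + B₂ * Real.sin (m*t))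
      = if n = m then π * (A₁*A₂ + B₁*B₂) else 0 := by
  have key : ∀ t:ℝ, (A₁ * Real.cos (n*t) + B₁ * Real.sin (n*t))
        * (A₂ * Real.cos (m*t) + B₂ * Real.sin (m*t))
      = A₁*A₂ * (Real.cos (n*t) * Real.cos (m*t))
        + (A₁*B₂ * (Real.sin (m*t) * Real.cos (n*t))
          + (B₁*A₂ * (Real.sin (n*t) * Real.cos (m*t))
            + B₁*B₂ * (Real.sin (n*t) * Real.sin (m*t)))) := by
    intro t; ring
  rw [intervalIntegral.integral_congr (fun t _ => key t)]
  rw [intervalIntegral.integral_add (by apply Continuous.intervalIntegrable; fun_prop)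
        (by apply Continuous.intervalIntegrable; fun_prop),
      intervalIntegral.integral_add (by apply Continuous.intervalIntegrable; fun_prop)
        (by apply Continuous.intervalIntegrable; fun_prop),
      intervalIntegral.integral_add (by apply Continuous.intervalIntegrable; fun_prop)
        (by apply Continuous.intervalIntegrable; fun_prop),
      intervalIntegral.integral_const_mul, intervalIntegral.integral_const_mul,
      intervalIntegral.integral_const_mul, intervalIntegral.integral_const_mul,
      cosCos n m hn hm, sinSin n m hn hm, sinCos, sinCos]
  by_cases h : n = m
  · simp [h]; ring
  · simp [h]

lemma orth (s : Finset ℕ) (ν : ℕ → ℕ) (hν : ∀ k ∈ s, 0 < ν k)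
    (hinj : ∀ k ∈ s, ∀ j ∈ s, ν k = ν j → k = j) (A B : ℕ → ℝ) :
    ∫ t in (0:ℝ)..(2*π),
        (∑ k ∈ s, (A k * Real.cos ((ν k : ℝ) * t) + B k * Real.sin ((ν k : ℝ) * t)))^2
      = π * ∑ k ∈ s, (A k ^ 2 + B k ^ 2) := by
  have h1 : ∀ t : ℝ, (∑ k ∈ s, (A k * Real.cos ((ν k : ℝ) * t) + B k * Real.sin ((ν k : ℝ) * t)))^2
      = ∑ k ∈ s, ∑ j ∈ s,
          (A k * Real.cos ((ν k : ℝ) * t) + B k * Real.sin ((ν k : ℝ) * t))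
          * (A j * Real.cos ((ν j : ℝ) * t) + B j * Real.sin ((ν j : ℝ) * t)) := by
    intro t; rw [sq, Finset.sum_mul_sum]
  rw [intervalIntegral.integral_congr (fun t _ => h1 t),
      intervalIntegral.integral_finset_sum
        (fun k _ => by apply Continuous.intervalIntegrable; fun_prop)]
  have h2 : ∀ k ∈ s, (∫ t in (0:ℝ)..(2*π), ∑ j ∈ s,
          (A k * Real.cos ((ν k : ℝ) * t) + B k * Real.sin ((ν k : ℝ) * t))
          * (A j * Real.cos ((ν j : ℝ) * t) + B j * Real.sin ((ν j : ℝ) * t)))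
      = π * (A k ^ 2 + B k ^ 2) := by
    intro k hk
    rw [intervalIntegral.integral_finset_sum
        (fun j _ => by apply Continuous.intervalIntegrable; fun_prop)]
    have h3 : ∀ j ∈ s, (∫ t in (0:ℝ)..(2*π),
          (A k * Real.cos ((ν k : ℝ) * t) + B k * Real.sin ((ν k : ℝ) * t))
          * (A j * Real.cos ((ν j : ℝ) * t) + B j * Real.sin ((ν j : ℝ) * t)))
        = if j = k then π * (A k ^ 2 + B k ^ 2) else 0 := by
      intro j hj
      rw [prodInt (ν k) (ν j) (hν k hk) (hν j hj)]
      by_cases h : j = k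
      · subst h; rw [if_pos rfl, if_pos rfl]; ring
      · rw [if_neg (fun hh => h (hinj j hj k hk hh.symm)), if_neg h]
    rw [Finset.sum_congr rfl h3, Finset.sum_ite_eq' s k, if_pos hk]
  rw [Finset.sum_congr rfl h2, ← Finset.mul_sum]

/-- Two-sided observability estimate (equation (3.2) of the paper) for the decoupled
string-beam dual problem, valid for observation times `T > 2π`, with constants
depending only on `T`. -/
theorem stmt_8 (T : ℝ) (hT : 2 * Real.pi < T) :
    ∃ c₁ > (0 : ℝ), ∃ c₂ > (0 : ℝ),
      ∀ ξ ∈ Set.Ioo (0 : ℝ) Real.pi, ∀ η ∈ Set.Ioo (0 : ℝ) Real.pi,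
      ∀ N : ℕ, 0 < N → ∀ a b α β : ℕ → ℝ,
        c₁ * (∑ k ∈ Finset.Icc 1 N,
                (a k ^ 2 + ((k : ℝ) ^ 2)⁻¹ * b k ^ 2) * Real.sin ((k : ℝ) * ξ) ^ 2
              + ∑ k ∈ Finset.Icc 1 N,
                (α k ^ 2 + ((k : ℝ) ^ 4)⁻¹ * β k ^ 2) * Real.sin ((k : ℝ) * η) ^ 2)
          ≤ (∫ t in (0 : ℝ)..T,
              ((∑ k ∈ Finset.Icc 1 N,
                  (a k * Real.cos ((k : ℝ) * t) + b k / (k : ℝ) * Real.sin ((k : ℝ) * t))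
                    * Real.sin ((k : ℝ) * ξ)) ^ 2
               + (∑ k ∈ Finset.Icc 1 N,
                  (α k * Real.cos ((k : ℝ) ^ 2 * t)
                    + β k / (k : ℝ) ^ 2 * Real.sin ((k : ℝ) ^ 2 * t))
                    * Real.sin ((k : ℝ) * η)) ^ 2)) ∧
        (∫ t in (0 : ℝ)..T,
              ((∑ k ∈ Finset.Icc 1 N,
                  (a k * Real.cos ((k : ℝ) * t) + b k / (k : ℝ) * Real.sin ((k : ℝ) * t))
                    * Real.sin ((k : ℝ) * ξ)) ^ 2
               + (∑ k ∈ Finset.Icc 1 N,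
                  (α k * Real.cos ((k : ℝ) ^ 2 * t)
                    + β k / (k : ℝ) ^ 2 * Real.sin ((k : ℝ) ^ 2 * t))
                    * Real.sin ((k : ℝ) * η)) ^ 2))
          ≤ c₂ * (∑ k ∈ Finset.Icc 1 N,
                (a k ^ 2 + ((k : ℝ) ^ 2)⁻¹ * b k ^ 2) * Real.sin ((k : ℝ) * ξ) ^ 2
              + ∑ k ∈ Finset.Icc 1 N,
                (α k ^ 2 + ((k : ℝ) ^ 4)⁻¹ * β k ^ 2) * Real.sin ((k : ℝ) * η) ^ 2) := by
  have hπ : (0:ℝ) < π := Real.pi_pos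
  have hT0 : (0:ℝ) < T := lt_trans (by positivity) hT
  set m : ℕ := ⌈T / (2*π)⌉₊ with hm
  have hm1 : 1 ≤ m := Nat.one_le_ceil_iff.mpr (by positivity)
  have hTm : T ≤ m * (2*π) := by
    have := Nat.le_ceil (T / (2*π))
    rw [div_le_iff₀ (by positivity)] at this
    exact this.trans_eq (by rw [hm])
  refine ⟨π, hπ, m * π, by positivity, ?_⟩
  intro ξ hξ η hη N hN a b α β
  set s := Finset.Icc 1 N with hs
  -- the two inner sums in orthogonality-friendly form
  set A1 : ℕ → ℝ := fun k => a k * Real.sin (k * ξ) with hA1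
  set B1 : ℕ → ℝ := fun k => b k / k * Real.sin (k * ξ) with hB1
  set A2 : ℕ → ℝ := fun k => α k * Real.sin (k * η) with hA2
  set B2 : ℕ → ℝ := fun k => β k / (k:ℝ)^2 * Real.sin (k * η) with hB2
  set g : ℝ → ℝ := fun t =>
      (∑ k ∈ s, (A1 k * Real.cos ((k : ℝ) * t) + B1 k * Real.sin ((k : ℝ) * t)))^2
    + (∑ k ∈ s, (A2 k * Real.cos ((k^2 : ℕ) * t) + B2 k * Real.sin ((k^2 : ℕ) * t)))^2
    with hg
  have hcont : Continuous g := by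
    apply Continuous.add <;>
    · apply Continuous.pow
      apply continuous_finset_sum
      intro k _
      fun_prop
  have hgint : ∀ t₁ t₂ : ℝ, IntervalIntegrable g MeasureTheory.volume t₁ t₂ :=
    fun t₁ t₂ => hcont.intervalIntegrable t₁ t₂
  have hgnn : ∀ t : ℝ, 0 ≤ g t := fun t => by rw [hg]; positivity
  -- statement integrand equals g
  have hpt : ∀ t : ℝ,
      ((∑ k ∈ s, (a k * Real.cos ((k : ℝ) * t) + b k / (k : ℝ) * Real.sin ((k : ℝ) * t))
          * Real.sin ((k : ℝ) * ξ)) ^ 2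
       + (∑ k ∈ s, (α k * Real.cos ((k : ℝ) ^ 2 * t)
          + β k / (k : ℝ) ^ 2 * Real.sin ((k : ℝ) ^ 2 * t)) * Real.sin ((k : ℝ) * η)) ^ 2)
      = g t := by
    intro t
    rw [hg]
    congr 1
    · congr 1
      refine Finset.sum_congr rfl fun k _ => ?_
      rw [hA1, hB1]; ring
    · congr 1
      refine Finset.sum_congr rfl fun k _ => ?_
      rw [hA2, hB2]; push_cast; ring
  have hintg : ∀ u v : ℝ,
      (∫ t in u..v,
        ((∑ k ∈ s, (a k * Real.cos ((k : ℝ) * t) + b k / (k : ℝ) * Real.sin ((k : ℝ) * t))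
            * Real.sin ((k : ℝ) * ξ)) ^ 2
         + (∑ k ∈ s, (α k * Real.cos ((k : ℝ) ^ 2 * t)
            + β k / (k : ℝ) ^ 2 * Real.sin ((k : ℝ) ^ 2 * t)) * Real.sin ((k : ℝ) * η)) ^ 2))
      = ∫ t in u..v, g t :=
    fun u v => intervalIntegral.integral_congr (fun t _ => hpt t)
  -- value over one period
  set E : ℝ := (∑ k ∈ s, (a k ^ 2 + ((k : ℝ) ^ 2)⁻¹ * b k ^ 2) * Real.sin ((k : ℝ) * ξ) ^ 2
      + ∑ k ∈ s, (α k ^ 2 + ((k : ℝ) ^ 4)⁻¹ * β k ^ 2) * Real.sin ((k : ℝ) * η) ^ 2) with hE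
  have hc1 : Continuous fun t : ℝ =>
      (∑ k ∈ s, (A1 k * Real.cos ((k : ℝ) * t) + B1 k * Real.sin ((k : ℝ) * t)))^2 := by
    apply Continuous.pow
    exact continuous_finset_sum _ (fun k _ => by fun_prop)
  have hc2 : Continuous fun t : ℝ =>
      (∑ k ∈ s, (A2 k * Real.cos ((k^2 : ℕ) * t) + B2 k * Real.sin ((k^2 : ℕ) * t)))^2 := by
    apply Continuous.pow
    exact continuous_finset_sum _ (fun k _ => by fun_prop)
  have hsplit : ∫ t in (0:ℝ)..(2*π), g t
      = (∫ t in (0:ℝ)..(2*π),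
          (∑ k ∈ s, (A1 k * Real.cos ((k : ℝ) * t) + B1 k * Real.sin ((k : ℝ) * t)))^2)
        + ∫ t in (0:ℝ)..(2*π),
          (∑ k ∈ s, (A2 k * Real.cos ((k^2 : ℕ) * t) + B2 k * Real.sin ((k^2 : ℕ) * t)))^2 :=
    intervalIntegral.integral_add (hc1.intervalIntegrable _ _) (hc2.intervalIntegrable _ _)
  have ho1 : ∫ t in (0:ℝ)..(2*π),
      (∑ k ∈ s, (A1 k * Real.cos ((k : ℝ) * t) + B1 k * Real.sin ((k : ℝ) * t)))^2
      = π * ∑ k ∈ s, (A1 k ^ 2 + B1 k ^ 2) :=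
    orth s (fun k => k) (fun k hk => (Finset.mem_Icc.mp hk).1)
      (fun k _ j _ h => h) A1 B1
  have ho2 : ∫ t in (0:ℝ)..(2*π),
      (∑ k ∈ s, (A2 k * Real.cos ((k^2 : ℕ) * t) + B2 k * Real.sin ((k^2 : ℕ) * t)))^2
      = π * ∑ k ∈ s, (A2 k ^ 2 + B2 k ^ 2) :=
    orth s (fun k => k^2)
      (fun k hk => pow_pos (Finset.mem_Icc.mp hk).1 2)
      (fun k _ j _ h => Nat.pow_left_injective (by norm_num) h) A2 B2
  have e1 : ∑ k ∈ s, (A1 k ^ 2 + B1 k ^ 2)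
      = ∑ k ∈ s, (a k ^ 2 + ((k : ℝ) ^ 2)⁻¹ * b k ^ 2) * Real.sin ((k : ℝ) * ξ) ^ 2 :=
    Finset.sum_congr rfl fun k hk => by
      have hk0 : ((k:ℝ)) ≠ 0 := by
        have := (Finset.mem_Icc.mp hk).1; positivity
      rw [hA1, hB1]; field_simp
  have e2 : ∑ k ∈ s, (A2 k ^ 2 + B2 k ^ 2)
      = ∑ k ∈ s, (α k ^ 2 + ((k : ℝ) ^ 4)⁻¹ * β k ^ 2) * Real.sin ((k : ℝ) * η) ^ 2 :=
    Finset.sum_congr rfl fun k hk => by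
      have hk0 : ((k:ℝ)) ≠ 0 := by
        have := (Finset.mem_Icc.mp hk).1; positivity
      rw [hA2, hB2]; field_simp
  have hper1 : ∫ t in (0:ℝ)..(2*π), g t = π * E := by
    rw [hsplit, ho1, ho2, e1, e2, hE]; ring
  -- periodicity
  have hcosp : ∀ (n:ℕ) (t:ℝ), Real.cos ((n:ℝ)*(t+2*π)) = Real.cos ((n:ℝ)*t) := by
    intro n t
    rw [show (n:ℝ)*(t+2*π) = (n:ℝ)*t + n*(2*π) by ring, Real.cos_add_nat_mul_two_pi]
  have hsinp : ∀ (n:ℕ) (t:ℝ), Real.sin ((n:ℝ)*(t+2*π)) = Real.sin ((n:ℝ)*t) := by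
    intro n t
    rw [show (n:ℝ)*(t+2*π) = (n:ℝ)*t + n*(2*π) by ring, Real.sin_add_nat_mul_two_pi]
  have hper : Function.Periodic g (2*π) := by
    intro t
    simp only [hg]
    congr 1
    · congr 1
      exact Finset.sum_congr rfl fun k _ => by rw [hcosp, hsinp]
    · congr 1
      exact Finset.sum_congr rfl fun k _ => by rw [hcosp, hsinp]
  -- lower bound
  have hadj1 : (∫ t in (0:ℝ)..(2*π), g t) + ∫ t in (2*π)..T, g t = ∫ t in (0:ℝ)..T, g t :=
    intervalIntegral.integral_add_adjacent_intervals (hgint _ _) (hgint _ _)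
  have hnn1 : 0 ≤ ∫ t in (2*π)..T, g t :=
    intervalIntegral.integral_nonneg hT.le (fun x _ => hgnn x)
  -- upper bound
  have hadj2 : (∫ t in (0:ℝ)..T, g t) + ∫ t in T..((m:ℝ)*(2*π)), g t
      = ∫ t in (0:ℝ)..((m:ℝ)*(2*π)), g t :=
    intervalIntegral.integral_add_adjacent_intervals (hgint _ _) (hgint _ _)
  have hnn2 : 0 ≤ ∫ t in T..((m:ℝ)*(2*π)), g t :=
    intervalIntegral.integral_nonneg hTm (fun x _ => hgnn x)
  have hmul : ∫ t in (0:ℝ)..((m:ℝ)*(2*π)), g t = m * ∫ t in (0:ℝ)..(2*π), g t := by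
    have h := hper.intervalIntegral_add_zsmul_eq (m:ℤ) 0 hgint
    simpa [zsmul_eq_mul] using h
  constructor
  · rw [hintg 0 T]
    linarith [hper1, hadj1, hnn1]
  · rw [hintg 0 T]
    have : (∫ t in (0:ℝ)..T, g t) ≤ m * (π * E) := by
      rw [← hper1, ← hmul]
      linarith [hadj2, hnn2]
    linarith [this]
end

section
/- Let N be a positive integer, S > 0, ω ≥ 0, and ξ, η ∈ (0,π) with sin(kξ) ≠ 0 and sin(kη) ≠ 0 for all 1 ≤ k ≤ N. For real numbers α_k⁰, α_k¹, β_k⁰, β_k¹ (1 ≤ k ≤ N), define u₁(s,ξ) = Σ_{k=1}^N ( α_k⁰ cos(ks) + (α_k¹/k) sin(ks) ) sin(kξ) and u₂(s,η) = Σ_{k=1}^N ( β_k⁰ cos(k²s) + (β_k¹/k²) sin(k²s) ) sin(kη), and set a(U₀,U₀) = ∫₀^S e^{−2ωs} ( u₁(s,ξ)² + u₂(s,η)² ) ds. Then a(U₀,U₀) ≥ 0, and a(U₀,U₀) = 0 if and only if all the coefficients α_k⁰, α_k¹, β_k⁰, β_k¹ vanish; i.e., the approximate controllability Gramian a^N_{ω,S}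 is a positive definite quadratic form on ℝ^{4N}. -/
open Real Finset MeasureTheory

/-- Vandermonde-type lemma: if all power sums vanish, the weights vanish. -/
private lemma vand_aux (T : Finset ℕ) (x w : ℕ → ℝ) (hinj : Set.InjOn x T)
    (h : ∀ j : ℕ, ∑ k ∈ T, w k * x k ^ j = 0) : ∀ k ∈ T, w k = 0 := by
  have hp : ∀ p : Polynomial ℝ, ∑ k ∈ T, w k * p.eval (x k) = 0 := by
    intro p
    have hrw : ∀ k ∈ T, w k * p.eval (x k)
        = ∑ i ∈ Finset.range (p.natDegree + 1), p.coeff i * (w k * x k ^ i) := by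
      intro k _
      rw [Polynomial.eval_eq_sum_range, Finset.mul_sum]
      exact Finset.sum_congr rfl fun i _ => by ring
    rw [Finset.sum_congr rfl hrw, Finset.sum_comm]
    refine Finset.sum_eq_zero fun i _ => ?_
    rw [← Finset.mul_sum, h i, mul_zero]
  intro k hk
  have h1 := hp (Lagrange.basis T x k)
  rw [Finset.sum_eq_single_of_mem k hk] at h1
  · rwa [Lagrange.eval_basis_self hinj hk, mul_one] at h1
  · intro j hj hjk
    rw [Lagrange.eval_basis_of_ne (Ne.symm hjk) hj, mul_zero]

/-- Linear independence of `cos (c k * s)`, `sin (c k * s)` on an interval `(0,S)`. -/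
private lemma trig_indep_aux (T : Finset ℕ) (c a b : ℕ → ℝ)
    (hc0 : ∀ k ∈ T, 0 < c k) (hinj : Set.InjOn c T)
    (S : ℝ) (hS : 0 < S)
    (h : ∀ s ∈ Set.Ioo (0:ℝ) S,
      ∑ k ∈ T, (a k * Real.cos (c k * s) + b k * Real.sin (c k * s)) = 0) :
    ∀ k ∈ T, a k = 0 ∧ b k = 0 := by
  classical
  set AB : ℕ → ℕ → ℝ × ℝ := fun k n =>
    Nat.rec (a k, b k) (fun _ p => (c k * p.2, -(c k) * p.1)) n with hAB
  set g : ℕ → ℝ → ℝ := fun n s =>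
    ∑ k ∈ T, ((AB k n).1 * Real.cos (c k * s) + (AB k n).2 * Real.sin (c k * s)) with hg
  have hderiv : ∀ n s, HasDerivAt (g n) (g (n+1) s) s := by
    intro n s
    have hterm : ∀ k ∈ T, HasDerivAt
        (fun s => (AB k n).1 * Real.cos (c k * s) + (AB k n).2 * Real.sin (c k * s))
        ((AB k (n+1)).1 * Real.cos (c k * s) + (AB k (n+1)).2 * Real.sin (c k * s)) s := by
      intro k _
      have hc : HasDerivAt (fun s : ℝ => c k * s) (c k) s := by
        simpa using (hasDerivAt_id s).const_mul (c k)
      have h1 : HasDerivAt (fun s => Real.cos (c k * s)) (-Real.sin (c k * s) * c k) s :=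
        (Real.hasDerivAt_cos (c k * s)).comp s hc
      have h2 : HasDerivAt (fun s => Real.sin (c k * s)) (Real.cos (c k * s) * c k) s :=
        (Real.hasDerivAt_sin (c k * s)).comp s hc
      have hsum := (h1.const_mul ((AB k n).1)).fun_add (h2.const_mul ((AB k n).2))
      have e1 : (AB k (n+1)).1 = c k * (AB k n).2 := rfl
      have e2 : (AB k (n+1)).2 = -(c k) * (AB k n).1 := rfl
      rw [e1, e2]
      refine hsum.congr_deriv ?_
      ring
    exact HasDerivAt.fun_sum hterm
  have hzero : ∀ n, ∀ s ∈ Set.Ioo (0:ℝ) S, g n s = 0 := by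
    intro n
    induction n with
    | zero =>
      intro s hs
      simpa [hg, hAB] using h s hs
    | succ n ih =>
      intro s hs
      have hev : g n =ᶠ[nhds s] (fun _ => (0:ℝ)) :=
        Filter.eventuallyEq_of_mem (isOpen_Ioo.mem_nhds hs) ih
      have hd0 : deriv (g n) s = 0 := by
        rw [hev.deriv_eq]; simp
      rw [← (hderiv n s).deriv]
      exact hd0
  have hAB_even : ∀ k, ∀ j : ℕ,
      AB k (2*j) = ((-(c k^2))^j * a k, (-(c k^2))^j * b k) := by
    intro k j
    induction j with
    | zero => simp [hAB]
    | succ j ih =>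
      have e0 : 2*(j+1) = 2*j+1+1 := by ring
      have e1 : AB k (2*j+1+1) = (c k * (AB k (2*j+1)).2, -(c k) * (AB k (2*j+1)).1) := rfl
      have e2 : AB k (2*j+1) = (c k * (AB k (2*j)).2, -(c k) * (AB k (2*j)).1) := rfl
      rw [e0, e1, e2, ih]
      simp only [Prod.mk.injEq]
      constructor <;> ring
  have hAB_odd : ∀ k, ∀ j : ℕ,
      AB k (2*j+1) = ((-(c k^2))^j * (c k * b k), (-(c k^2))^j * (-(c k) * a k)) := by
    intro k j
    have e2 : AB k (2*j+1) = (c k * (AB k (2*j)).2, -(c k) * (AB k (2*j)).1) := rfl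
    rw [e2, hAB_even]
    simp only [Prod.mk.injEq]
    constructor <;> ring
  set s₀ : ℝ := S/2 with hs₀def
  have hs₀ : s₀ ∈ Set.Ioo (0:ℝ) S := ⟨by positivity, by linarith⟩
  set x : ℕ → ℝ := fun k => -(c k ^ 2) with hx
  have hxinj : Set.InjOn x T := by
    intro i hi j hj hij
    have h2 : c i ^ 2 = c j ^ 2 := by
      have := hij; simp only [hx] at this; linarith [neg_injective this]
    have hpos : 0 < c i + c j := add_pos (hc0 i hi) (hc0 j hj)
    have hz : (c i - c j) * (c i + c j) = 0 := by linear_combination h2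
    rcases mul_eq_zero.1 hz with h' | h'
    · exact hinj hi hj (by linarith)
    · linarith
  set w : ℕ → ℝ := fun k => a k * Real.cos (c k * s₀) + b k * Real.sin (c k * s₀) with hw
  set v : ℕ → ℝ := fun k =>
    c k * b k * Real.cos (c k * s₀) + (-(c k) * a k) * Real.sin (c k * s₀) with hv
  have heven : ∀ j : ℕ, ∑ k ∈ T, w k * x k ^ j = 0 := by
    intro j
    have h0 := hzero (2*j) s₀ hs₀
    rw [hg] at h0
    rw [← h0]
    refine Finset.sum_congr rfl fun k _ => ?_
    rw [hAB_even]
    simp only [hw, hx]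
    ring
  have hodd : ∀ j : ℕ, ∑ k ∈ T, v k * x k ^ j = 0 := by
    intro j
    have h0 := hzero (2*j+1) s₀ hs₀
    rw [hg] at h0
    rw [← h0]
    refine Finset.sum_congr rfl fun k _ => ?_
    rw [hAB_odd]
    simp only [hv, hx]
    ring
  have hw0 := vand_aux T x w hxinj heven
  have hv0 := vand_aux T x v hxinj hodd
  intro k hk
  have hck := (hc0 k hk).ne'
  have hwk : a k * Real.cos (c k * s₀) + b k * Real.sin (c k * s₀) = 0 := hw0 k hk
  have hvk0 : c k * b k * Real.cos (c k * s₀) + (-(c k) * a k) * Real.sin (c k * s₀) = 0 :=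
    hv0 k hk
  have hvk : b k * Real.cos (c k * s₀) - a k * Real.sin (c k * s₀) = 0 := by
    have : c k * (b k * Real.cos (c k * s₀) - a k * Real.sin (c k * s₀)) = 0 := by
      linear_combination hvk0
    exact (mul_eq_zero.1 this).resolve_left hck
  have P := Real.sin_sq_add_cos_sq (c k * s₀)
  constructor
  · linear_combination Real.cos (c k * s₀) * hwk - Real.sin (c k * s₀) * hvk - a k * P
  · linear_combination Real.sin (c k * s₀) * hwk + Real.cos (c k * s₀) * hvk - b k * P

/-- The approximate controllability Gramian `a^N_{ω,S}` is a positive definite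
quadratic form on `ℝ^{4N}`: it is nonnegative, and it vanishes exactly when all the
coefficients `αₖ⁰, αₖ¹, βₖ⁰, βₖ¹` vanish. -/
theorem stmt_14 (N : ℕ) (hN : 0 < N) (S ω : ℝ) (hS : 0 < S) (hω : 0 ≤ ω)
    (ξ η : ℝ) (hξ : ξ ∈ Set.Ioo (0 : ℝ) Real.pi) (hη : η ∈ Set.Ioo (0 : ℝ) Real.pi)
    (hsξ : ∀ k ∈ Finset.Icc 1 N, Real.sin ((k : ℝ) * ξ) ≠ 0)
    (hsη : ∀ k ∈ Finset.Icc 1 N, Real.sin ((k : ℝ) * η) ≠ 0)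
    (α0 α1 β0 β1 : ℕ → ℝ) (G : ℝ)
    (hG : G = ∫ s in (0 : ℝ)..S, Real.exp (-2 * ω * s) *
        ((∑ k ∈ Finset.Icc 1 N,
            (α0 k * Real.cos ((k : ℝ) * s) + α1 k / (k : ℝ) * Real.sin ((k : ℝ) * s))
              * Real.sin ((k : ℝ) * ξ)) ^ 2
         + (∑ k ∈ Finset.Icc 1 N,
            (β0 k * Real.cos ((k : ℝ) ^ 2 * s)
              + β1 k / (k : ℝ) ^ 2 * Real.sin ((k : ℝ) ^ 2 * s))
              * Real.sin ((k : ℝ) * η)) ^ 2)) :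
    0 ≤ G ∧
    (G = 0 ↔ ∀ k ∈ Finset.Icc 1 N, α0 k = 0 ∧ α1 k = 0 ∧ β0 k = 0 ∧ β1 k = 0) := by
  set f₁ : ℝ → ℝ := fun s => ∑ k ∈ Finset.Icc 1 N,
      (α0 k * Real.cos ((k : ℝ) * s) + α1 k / (k : ℝ) * Real.sin ((k : ℝ) * s))
        * Real.sin ((k : ℝ) * ξ) with hf₁
  set f₂ : ℝ → ℝ := fun s => ∑ k ∈ Finset.Icc 1 N,
      (β0 k * Real.cos ((k : ℝ) ^ 2 * s)
        + β1 k / (k : ℝ) ^ 2 * Real.sin ((k : ℝ) ^ 2 * s))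
        * Real.sin ((k : ℝ) * η) with hf₂
  set I : ℝ → ℝ := fun s => Real.exp (-2 * ω * s) * (f₁ s ^ 2 + f₂ s ^ 2) with hIdef
  have hGI : G = ∫ s in (0:ℝ)..S, I s := hG
  have hnn : ∀ s, 0 ≤ I s := fun s => mul_nonneg (Real.exp_nonneg _) (by positivity)
  have hcont : Continuous I := by
    rw [hIdef, hf₁, hf₂]; fun_prop
  have hInt : IntervalIntegrable I volume 0 S := hcont.intervalIntegrable 0 S
  have hGnn : 0 ≤ G := by
    rw [hGI]
    exact intervalIntegral.integral_nonneg hS.le fun u _ => hnn u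
  refine ⟨hGnn, ?_, ?_⟩
  · -- G = 0 → coefficients vanish
    intro hG0
    have hμ : volume (Function.support I ∩ Set.Ioc 0 S) = 0 := by
      by_contra hm
      have hpos : 0 < ∫ s in (0:ℝ)..S, I s :=
        (intervalIntegral.integral_pos_iff_support_of_nonneg_ae
          (Filter.Eventually.of_forall hnn) hInt).2 ⟨hS, pos_iff_ne_zero.2 hm⟩
      rw [← hGI, hG0] at hpos
      exact lt_irrefl 0 hpos
    have hI0 : ∀ s ∈ Set.Ioo (0:ℝ) S, I s = 0 := by
      intro s hs
      by_contra hne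
      have hUopen : IsOpen (I ⁻¹' {(0:ℝ)}ᶜ ∩ Set.Ioo 0 S) :=
        (isOpen_compl_singleton.preimage hcont).inter isOpen_Ioo
      have hsU : s ∈ I ⁻¹' {(0:ℝ)}ᶜ ∩ Set.Ioo 0 S := ⟨hne, hs⟩
      obtain ⟨ε, hε, hball⟩ := Metric.isOpen_iff.1 hUopen s hsU
      have hsub : Metric.ball s ε ⊆ Function.support I ∩ Set.Ioc 0 S := by
        intro y hy
        obtain ⟨hy1, hy2⟩ := hball hy
        exact ⟨hy1, Set.Ioo_subset_Ioc_self hy2⟩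
      have := measure_mono_null hsub hμ
      exact (Metric.measure_ball_pos volume s hε).ne' this
    have hf0 : ∀ s ∈ Set.Ioo (0:ℝ) S, f₁ s = 0 ∧ f₂ s = 0 := by
      intro s hs
      have h0 := hI0 s hs
      have hexp : Real.exp (-2 * ω * s) ≠ 0 := (Real.exp_pos _).ne'
      have hsq : f₁ s ^ 2 + f₂ s ^ 2 = 0 := by
        rcases mul_eq_zero.1 h0 with h' | h'
        · exact absurd h' hexp
        · exact h'
      have h1 := (add_eq_zero_iff_of_nonneg (sq_nonneg _) (sq_nonneg _)).1 hsq
      exact ⟨pow_eq_zero_iff two_ne_zero |>.1 h1.1, pow_eq_zero_iff two_ne_zero |>.1 h1.2⟩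
    -- first family : c k = k
    have hα := trig_indep_aux (Finset.Icc 1 N) (fun k => (k:ℝ))
        (fun k => α0 k * Real.sin ((k:ℝ) * ξ))
        (fun k => α1 k / (k:ℝ) * Real.sin ((k:ℝ) * ξ))
        (fun k hk => by
          have h1 : 1 ≤ k := (Finset.mem_Icc.1 hk).1
          show (0:ℝ) < (k:ℝ)
          exact_mod_cast Nat.succ_le_iff.1 h1)
        (fun i _ j _ hij => Nat.cast_injective hij)
        S hS
        (by
          intro s hs
          have := (hf0 s hs).1
          rw [hf₁] at this
          rw [← this]
          exact Finset.sum_congr rfl fun k _ => by ring)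
    have hβ := trig_indep_aux (Finset.Icc 1 N) (fun k => (k:ℝ)^2)
        (fun k => β0 k * Real.sin ((k:ℝ) * η))
        (fun k => β1 k / (k:ℝ)^2 * Real.sin ((k:ℝ) * η))
        (fun k hk => by
          have h1 : 1 ≤ k := (Finset.mem_Icc.1 hk).1
          have h2 : (0:ℝ) < (k:ℝ) := by exact_mod_cast Nat.succ_le_iff.1 h1
          show (0:ℝ) < (k:ℝ)^2
          positivity)
        (fun i hi j hj hij => by
          have hi1 : 1 ≤ i := (Finset.mem_Icc.1 hi).1
          have hj1 : 1 ≤ j := (Finset.mem_Icc.1 hj).1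
          have hip : (0:ℝ) < (i:ℝ) := by exact_mod_cast Nat.succ_le_iff.1 hi1
          have hjp : (0:ℝ) < (j:ℝ) := by exact_mod_cast Nat.succ_le_iff.1 hj1
          have h2 : ((i:ℝ))^2 = ((j:ℝ))^2 := hij
          have hz : ((i:ℝ) - (j:ℝ)) * ((i:ℝ) + (j:ℝ)) = 0 := by linear_combination h2
          rcases mul_eq_zero.1 hz with h' | h'
          · exact_mod_cast (by linarith : (i:ℝ) = (j:ℝ))
          · linarith)
        S hS
        (by
          intro s hs
          have := (hf0 s hs).2
          rw [hf₂] at this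
          rw [← this]
          exact Finset.sum_congr rfl fun k _ => by ring)
    intro k hk
    have hk1 : 1 ≤ k := (Finset.mem_Icc.1 hk).1
    have hkR : ((k:ℝ)) ≠ 0 := by
      have : (0:ℝ) < (k:ℝ) := by exact_mod_cast Nat.succ_le_iff.1 hk1
      exact this.ne'
    obtain ⟨ha0, ha1⟩ := hα k hk
    obtain ⟨hb0, hb1⟩ := hβ k hk
    have hsξk := hsξ k hk
    have hsηk := hsη k hk
    refine ⟨?_, ?_, ?_, ?_⟩
    · exact (mul_eq_zero.1 ha0).resolve_right hsξk
    · have := (mul_eq_zero.1 ha1).resolve_right hsξk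
      rcases div_eq_zero_iff.1 this with h' | h'
      · exact h'
      · exact absurd h' hkR
    · exact (mul_eq_zero.1 hb0).resolve_right hsηk
    · have := (mul_eq_zero.1 hb1).resolve_right hsηk
      rcases div_eq_zero_iff.1 this with h' | h'
      · exact h'
      · exact absurd (pow_eq_zero_iff two_ne_zero |>.1 h') hkR
  · -- coefficients vanish → G = 0
    intro hall
    rw [hGI]
    have : ∀ s : ℝ, I s = 0 := by
      intro s
      have h1 : f₁ s = 0 := Finset.sum_eq_zero fun k hk => by
        rw [(hall k hk).1, (hall k hk).2.1]; simp
      have h2 : f₂ s = 0 := Finset.sum_eq_zero fun k hk => by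
        rw [(hall k hk).2.2.1, (hall k hk).2.2.2]; simp
      rw [hIdef]
      simp [h1, h2]
    simp [this]
end

section
/- Let n, m be positive integers, A an n×n real matrix, B an n×m real matrix, ω > 0 and T > 0. Set T_ω = T + 1/(2ω), let e_ω(s) = e^{−2ωs} for 0 ≤ s ≤ T and e_ω(s) = 2ω e^{−2ωT}(T_ω − s) for T ≤ s ≤ T_ω, and define Λ_ω = ∫₀^{T_ω} e_ω(s) e^{sA} B Bᵀ e^{sAᵀ} ds. Assume Λ_ω is positive definite. Then there exists a constant M > 0 such that every solution of the closed-loop system v'(t) = (−A − B Bᵀ Λ_ω^{−1}) v(t), v(0) = v₀, satisfies ‖v(t)‖ ≤ M e^{−ωt} ‖v₀‖ for all v₀ ∈ ℝⁿ and all t ≥ 0; equivalently, ‖exp( t(−A − B Bᵀ Λ_ω^{−1}) )‖ ≤ M e^{−ωt} for all t ≥ 0. -/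
set_option maxHeartbeats 1000000

open Matrix

section aux
open NormedSpace intervalIntegral

lemma aux_hasDerivAt {n m : ℕ} (A : Matrix (Fin n) (Fin n) ℝ) (B : Matrix (Fin n) (Fin m) ℝ)
    (L : Matrix (Fin n) (Fin n) ℝ →ₗ[ℝ] ℝ) (s : ℝ) :
    HasDerivAt (fun s : ℝ => L (exp (s • A) * (B * Bᵀ) * exp (s • Aᵀ)))
      (L (A * (exp (s • A) * (B * Bᵀ) * exp (s • Aᵀ)) +
        (exp (s • A) * (B * Bᵀ) * exp (s • Aᵀ)) * Aᵀ)) s := by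
  letI : SeminormedRing (Matrix (Fin n) (Fin n) ℝ) := Matrix.linftyOpSemiNormedRing
  letI : NormedRing (Matrix (Fin n) (Fin n) ℝ) := Matrix.linftyOpNormedRing
  letI : NormedAlgebra ℝ (Matrix (Fin n) (Fin n) ℝ) := Matrix.linftyOpNormedAlgebra
  have hE : HasDerivAt (fun u : ℝ => exp (u • A)) (A * exp (s • A)) s :=
    hasDerivAt_exp_smul_const' A s
  have hE' : HasDerivAt (fun u : ℝ => exp (u • Aᵀ)) (exp (s • Aᵀ) * Aᵀ) s :=
    hasDerivAt_exp_smul_const Aᵀ s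
  have hG := (hE.mul_const (B * Bᵀ)).mul hE'
  have := (L.toContinuousLinearMap.hasFDerivAt.comp_hasDerivAt s hG)
  convert this using 1
  · rfl
  · rfl
  · rfl
  simp [map_add, Matrix.mul_assoc]
  exact (map_add L _ _).symm

def auxL {n : ℕ} (x y : Fin n → ℝ) : Matrix (Fin n) (Fin n) ℝ →ₗ[ℝ] ℝ where
  toFun := fun M => x ⬝ᵥ M.mulVec y
  map_add' := fun M N => by simp [Matrix.add_mulVec, dotProduct_add]
  map_smul' := fun c M => by simp [Matrix.smul_mulVec, dotProduct_smul]

@[simp] lemma auxL_apply {n : ℕ} (x y : Fin n → ℝ) (M : Matrix (Fin n) (Fin n) ℝ) :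
    auxL x y M = x ⬝ᵥ M.mulVec y := rfl

lemma aux_nonneg {n m : ℕ} (A : Matrix (Fin n) (Fin n) ℝ) (B : Matrix (Fin n) (Fin m) ℝ)
    (x : Fin n → ℝ) (s : ℝ) :
    0 ≤ x ⬝ᵥ (exp (s • A) * (B * Bᵀ) * exp (s • Aᵀ)).mulVec x := by
  have ht : exp (s • Aᵀ) = (exp (s • A))ᵀ := by
    rw [← Matrix.transpose_smul, Matrix.exp_transpose]
  set E := exp (s • A)
  have : E * (B * Bᵀ) * Eᵀ = (E * B) * (E * B)ᵀ := by
    rw [Matrix.transpose_mul]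
    simp only [Matrix.mul_assoc]
  rw [ht, this]
  set N := E * B
  have : x ⬝ᵥ (N * Nᵀ).mulVec x = (Nᵀ.mulVec x) ⬝ᵥ (Nᵀ.mulVec x) := by
    rw [← Matrix.mulVec_mulVec, Matrix.dotProduct_mulVec, ← Matrix.mulVec_transpose]
  rw [this]
  exact Finset.sum_nonneg fun i _ => mul_self_nonneg _

lemma aux_deriv_dot {n : ℕ} (Q : Matrix (Fin n) (Fin n) ℝ) (v : ℝ → Fin n → ℝ)
    (w : Fin n → ℝ) (t : ℝ) (hv : HasDerivAt v w t) :
    HasDerivAt (fun t => v t ⬝ᵥ Q.mulVec (v t)) (w ⬝ᵥ Q.mulVec (v t) + v t ⬝ᵥ Q.mulVec w) t := by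
  have hvi : ∀ i, HasDerivAt (fun t => v t i) (w i) t := fun i => (hasDerivAt_pi.mp hv) i
  simp only [dotProduct, mulVec]
  have : ∀ i ∈ Finset.univ, HasDerivAt (fun t => v t i * ∑ j, Q i j * v t j)
      (w i * (∑ j, Q i j * v t j) + v t i * (∑ j, Q i j * w j)) t := by
    intro i _
    exact (hvi i).mul (HasDerivAt.fun_sum fun j _ => (hvi j).const_mul (Q i j))
  convert HasDerivAt.fun_sum this using 1
  · rfl
  · rfl
  rw [← Finset.sum_add_distrib]



lemma aux_key {n m : ℕ} (A : Matrix (Fin n) (Fin n) ℝ) (B : Matrix (Fin n) (Fin m) ℝ)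
    (ω T : ℝ) (hω : 0 < ω) (hT : 0 < T)
    (Tω : ℝ) (hTω : Tω = T + 1 / (2 * ω))
    (eω : ℝ → ℝ)
    (heω₁ : ∀ s ∈ Set.Icc (0 : ℝ) T, eω s = Real.exp (-2 * ω * s))
    (heω₂ : ∀ s ∈ Set.Icc T Tω, eω s = 2 * ω * Real.exp (-2 * ω * T) * (Tω - s))
    (Λ : Matrix (Fin n) (Fin n) ℝ)
    (hΛ : ∀ i j, Λ i j = ∫ s in (0 : ℝ)..Tω,
        eω s * ((NormedSpace.exp (s • A) * B * Bᵀ * NormedSpace.exp (s • Aᵀ)) i j))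
    (x : Fin n → ℝ) :
    2 * ω * (x ⬝ᵥ Λ.mulVec x) ≤ x ⬝ᵥ (A * Λ).mulVec x + x ⬝ᵥ (Λ * Aᵀ).mulVec x
      + 2 * (x ⬝ᵥ (B * Bᵀ).mulVec x) := by
  have hTT : T < Tω := by rw [hTω]; nlinarith [one_div_pos.mpr (mul_pos two_pos hω)]
  have hTω0 : (0:ℝ) < Tω := hT.trans hTT
  have hωT : Tω - T = 1 / (2 * ω) := by rw [hTω]; ring
  set c : ℝ := 2 * ω * Real.exp (-2 * ω * T) with hc
  have hc0 : 0 < c := by positivity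
  set ψ : ℝ → ℝ := fun s => if s ≤ T then Real.exp (-2 * ω * s) else c * (Tω - s) with hψ
  set G : ℝ → Matrix (Fin n) (Fin n) ℝ :=
    fun s => exp (s • A) * (B * Bᵀ) * exp (s • Aᵀ) with hG
  -- continuity of ψ
  have hψT : ∀ s ∈ Set.Icc T Tω, ψ s = c * (Tω - s) := by
    intro s hs
    by_cases h : s ≤ T
    · have hsT : s = T := le_antisymm h hs.1
      subst hsT
      simp only [hψ, if_pos le_rfl, hωT, hc]
      field_simp
    · simp [hψ, h]
  have hψcont : Continuous ψ := by
    apply Continuous.if_le (by fun_prop) (by fun_prop) continuous_id continuous_const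
    intro s hs
    simp only [id] at hs
    subst hs
    rw [hωT, hc]
    field_simp
  have hψeq : ∀ s ∈ Set.uIcc (0:ℝ) Tω, eω s = ψ s := by
    intro s hs
    rw [Set.uIcc_of_le hTω0.le] at hs
    by_cases h : s ≤ T
    · rw [heω₁ s ⟨hs.1, h⟩]; simp [hψ, h]
    · rw [heω₂ s ⟨(not_le.mp h).le, hs.2⟩, hψT s ⟨(not_le.mp h).le, hs.2⟩]
  -- quadratic / bilinear forms of G
  set F : (Fin n → ℝ) → (Fin n → ℝ) → ℝ → ℝ := fun a b s => a ⬝ᵥ (G s).mulVec b with hF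
  have hFd : ∀ a b s, HasDerivAt (F a b) (a ⬝ᵥ ((A * G s + G s * Aᵀ)).mulVec b) s := by
    intro a b s
    simpa using aux_hasDerivAt A B (auxL a b) s
  have hFc : ∀ a b, Continuous (F a b) :=
    fun a b => continuous_iff_continuousAt.mpr fun s => (hFd a b s).continuousAt
  -- bilinear representation of Λ
  have hbil : ∀ a b : Fin n → ℝ, a ⬝ᵥ Λ.mulVec b = ∫ s in (0:ℝ)..Tω, ψ s * F a b s := by
    intro a b
    have hΛ' : ∀ i j, Λ i j = ∫ s in (0:ℝ)..Tω, ψ s * G s i j := by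
      intro i j
      rw [hΛ i j]
      apply intervalIntegral.integral_congr
      intro s hs
      dsimp only
      rw [hψeq s hs]
      simp [hG, Matrix.mul_assoc]
    have hGij : ∀ i j, Continuous fun s => G s i j := by
      intro i j
      have : ∀ s, G s i j = F (Pi.single i 1) (Pi.single j 1) s := by
        intro s
        simp [hF, Matrix.mulVec_single, dotProduct, Pi.single_apply, Finset.sum_ite_eq',
          mul_comm]
      simpa [funext this] using hFc (Pi.single i 1) (Pi.single j 1)
    have hGc : ∀ i j, Continuous (fun s => a i * (ψ s * G s i j * b j)) := fun i j =>
      continuous_const.mul ((hψcont.mul (hGij i j)).mul continuous_const)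
    have hint : ∀ i j, IntervalIntegrable (fun s => a i * (ψ s * G s i j * b j))
        MeasureTheory.volume 0 Tω := fun i j => (hGc i j).intervalIntegrable _ _
    calc a ⬝ᵥ Λ.mulVec b = ∑ i, ∑ j, a i * (Λ i j * b j) := by
          simp [dotProduct, mulVec, Finset.mul_sum]
      _ = ∑ i, ∑ j, ∫ s in (0:ℝ)..Tω, a i * (ψ s * G s i j * b j) := by
          refine Finset.sum_congr rfl fun i _ => Finset.sum_congr rfl fun j _ => ?_
          rw [hΛ' i j, ← intervalIntegral.integral_mul_const, ← intervalIntegral.integral_const_mul]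
      _ = ∑ i, ∫ s in (0:ℝ)..Tω, ∑ j, a i * (ψ s * G s i j * b j) := by
          exact Finset.sum_congr rfl fun i _ =>
              (intervalIntegral.integral_finset_sum fun j _ => hint i j).symm
      _ = ∫ s in (0:ℝ)..Tω, ∑ i, ∑ j, a i * (ψ s * G s i j * b j) := by
          refine (intervalIntegral.integral_finset_sum ?_).symm
          intro i _
          exact ((continuous_finset_sum _ fun j _ => hGc i j).intervalIntegrable _ _)
      _ = ∫ s in (0:ℝ)..Tω, ψ s * F a b s := by
          apply intervalIntegral.integral_congr
          intro s _
          show ∑ i, ∑ j, a i * (ψ s * G s i j * b j) = ψ s * (a ⬝ᵥ (G s).mulVec b)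
          simp only [dotProduct, mulVec, Finset.mul_sum]
          refine Finset.sum_congr rfl fun i _ => ?_
          exact Finset.sum_congr rfl fun j _ => by ring
  -- quadratic form data
  set f : ℝ → ℝ := fun s => F x x s with hfdef
  set D : ℝ → ℝ := fun s => x ⬝ᵥ ((A * G s + G s * Aᵀ)).mulVec x with hDdef
  have hfd : ∀ s, HasDerivAt f (D s) s := hFd x x
  have hfc : Continuous f := hFc x x
  have hfnn : ∀ s, 0 ≤ f s := fun s => aux_nonneg A B x s
  have hABe : ∀ s, x ⬝ᵥ (A * G s).mulVec x = F (Aᵀ.mulVec x) x s := by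
    intro s
    rw [← Matrix.mulVec_mulVec, Matrix.dotProduct_mulVec, ← Matrix.mulVec_transpose]
  have hBAe : ∀ s, x ⬝ᵥ (G s * Aᵀ).mulVec x = F x (Aᵀ.mulVec x) s := by
    intro s
    rw [← Matrix.mulVec_mulVec]
  have hDe : ∀ s, D s = F (Aᵀ.mulVec x) x s + F x (Aᵀ.mulVec x) s := by
    intro s
    rw [← hABe, ← hBAe, hDdef]
    simp [Matrix.add_mulVec, dotProduct_add]
  have hDc : Continuous D := by
    rw [funext hDe]
    exact (hFc _ _).add (hFc _ _)
  -- integral representations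
  have e1 : x ⬝ᵥ (A * Λ).mulVec x = ∫ s in (0:ℝ)..Tω, ψ s * F (Aᵀ.mulVec x) x s := by
    rw [← hbil, ← Matrix.mulVec_mulVec, Matrix.dotProduct_mulVec, ← Matrix.mulVec_transpose]
  have e2 : x ⬝ᵥ (Λ * Aᵀ).mulVec x = ∫ s in (0:ℝ)..Tω, ψ s * F x (Aᵀ.mulVec x) s := by
    rw [← hbil, ← Matrix.mulVec_mulVec]
  have hsum : x ⬝ᵥ (A * Λ).mulVec x + x ⬝ᵥ (Λ * Aᵀ).mulVec x
      = ∫ s in (0:ℝ)..Tω, ψ s * D s := by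
    rw [e1, e2, ← intervalIntegral.integral_add
      ((hψcont.fun_mul (hFc _ _)).intervalIntegrable _ _)
      ((hψcont.fun_mul (hFc _ _)).intervalIntegrable _ _)]
    congr 1
    funext s
    rw [hDe s]
    ring
  have hf0 : f 0 = x ⬝ᵥ (B * Bᵀ).mulVec x := by
    simp [hfdef, hF, hG]
  -- the function g = ψ * f and FTC on the two pieces
  set g : ℝ → ℝ := fun s => ψ s * f s with hgdef
  have hg0 : g 0 = f 0 := by simp [hgdef, hψ, hT.le]
  have hgT : g Tω = 0 := by
    have := hψT Tω ⟨hTT.le, le_rfl⟩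
    simp [hgdef, this]
  have ftc1 : ∫ s in (0:ℝ)..T, (ψ s * D s - 2*ω*(ψ s * f s)) = g T - g 0 := by
    apply intervalIntegral.integral_eq_sub_of_hasDeriv_right_of_le hT.le
      ((hψcont.mul hfc).continuousOn)
    · intro s hs
      have hlin0 : HasDerivAt (fun u : ℝ => -2*ω*u) (-2*ω) s := by
        simpa using (hasDerivAt_id s).const_mul (-2*ω)
      have hexp : HasDerivAt (fun u : ℝ => Real.exp (-2*ω*u)) (Real.exp (-2*ω*s) * (-2*ω)) s := by
        simpa [mul_comm] using hlin0.exp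
      have hd : HasDerivAt (fun u => Real.exp (-2*ω*u) * f u)
          (Real.exp (-2*ω*s) * (-2*ω) * f s + Real.exp (-2*ω*s) * D s) s :=
        hexp.mul (hfd s)
      have hev : g =ᶠ[nhds s] (fun u => Real.exp (-2*ω*u) * f u) := by
        filter_upwards [Iio_mem_nhds hs.2] with u hu
        have hu' : u ≤ T := (Set.mem_Iio.mp hu).le
        simp [hgdef, hψ, hu']
      have hψs : ψ s = Real.exp (-2*ω*s) := by simp [hψ, hs.2.le]
      have : HasDerivAt g (ψ s * D s - 2*ω*(ψ s * f s)) s := by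
        refine (hd.congr_of_eventuallyEq hev).congr_deriv ?_
        rw [hψs]; ring
      exact this.hasDerivWithinAt
    · exact ((hψcont.mul hDc).sub
        (continuous_const.mul (hψcont.mul hfc))).intervalIntegrable _ _
  have ftc2 : ∫ s in T..Tω, (c*(Tω - s)*D s - c*f s) = g Tω - g T := by
    apply intervalIntegral.integral_eq_sub_of_hasDeriv_right_of_le hTT.le
      ((hψcont.mul hfc).continuousOn)
    · intro s hs
      have hlin : HasDerivAt (fun u : ℝ => c*(Tω - u)) (c * (-1)) s :=
        ((hasDerivAt_id s).const_sub Tω).const_mul c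
      have hd : HasDerivAt (fun u => c*(Tω - u) * f u)
          (c * (-1) * f s + c*(Tω - s) * D s) s := hlin.mul (hfd s)
      have hev : g =ᶠ[nhds s] (fun u => c*(Tω - u) * f u) := by
        filter_upwards [Ioi_mem_nhds hs.1] with u hu
        have hu' : ¬ (u ≤ T) := not_le.mpr (Set.mem_Ioi.mp hu)
        simp [hgdef, hψ, hu']
      have hψs : ψ s = c*(Tω - s) := hψT s ⟨hs.1.le, hs.2.le⟩
      have : HasDerivAt g (c*(Tω - s)*D s - c*f s) s := by
        refine (hd.congr_of_eventuallyEq hev).congr_deriv ?_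
        ring
      exact this.hasDerivWithinAt
    · exact (((continuous_const.mul (continuous_const.sub continuous_id)).mul hDc).sub
        (continuous_const.mul hfc)).intervalIntegrable _ _
  -- assemble
  have hI1 : IntervalIntegrable (fun s => ψ s * D s - 2*ω*(ψ s * f s)) MeasureTheory.volume 0 T :=
    ((hψcont.mul hDc).sub (continuous_const.mul (hψcont.mul hfc))).intervalIntegrable _ _
  have hI2 : IntervalIntegrable (fun s => ψ s * D s - 2*ω*(ψ s * f s)) MeasureTheory.volume T Tω :=
    ((hψcont.mul hDc).sub (continuous_const.mul (hψcont.mul hfc))).intervalIntegrable _ _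
  have split : ∫ s in (0:ℝ)..Tω, (ψ s * D s - 2*ω*(ψ s * f s))
      = (∫ s in (0:ℝ)..T, (ψ s * D s - 2*ω*(ψ s * f s)))
        + ∫ s in T..Tω, (ψ s * D s - 2*ω*(ψ s * f s)) :=
    (intervalIntegral.integral_add_adjacent_intervals hI1 hI2).symm
  have lin : ∫ s in (0:ℝ)..Tω, (ψ s * D s - 2*ω*(ψ s * f s))
      = (∫ s in (0:ℝ)..Tω, ψ s * D s) - 2*ω*(∫ s in (0:ℝ)..Tω, ψ s * f s) := by
    rw [intervalIntegral.integral_sub ((hψcont.fun_mul hDc).intervalIntegrable _ _)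
      ((continuous_const.fun_mul (hψcont.fun_mul hfc)).intervalIntegrable _ _),
      intervalIntegral.integral_const_mul]
  have piece2 : ∫ s in T..Tω, (ψ s * D s - 2*ω*(ψ s * f s))
      = (∫ s in T..Tω, (c*(Tω - s)*D s - c*f s))
        + ∫ s in T..Tω, (c - 2*ω*(c*(Tω - s)))*f s := by
    rw [← intervalIntegral.integral_add (f := fun s => c*(Tω - s)*D s - c*f s)
      (g := fun s => (c - 2*ω*(c*(Tω - s)))*f s)
      ((((continuous_const.mul (continuous_const.sub continuous_id')).mul hDc).sub
        (continuous_const.mul hfc)).intervalIntegrable _ _)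
      (((continuous_const.sub (continuous_const.mul
        (continuous_const.mul (continuous_const.sub continuous_id')))).mul hfc).intervalIntegrable _ _)]
    apply intervalIntegral.integral_congr
    intro s hs
    rw [Set.uIcc_of_le hTT.le] at hs
    have := hψT s hs
    dsimp only
    rw [this]
    ring
  have pos2 : 0 ≤ ∫ s in T..Tω, (c - 2*ω*(c*(Tω - s)))*f s := by
    apply intervalIntegral.integral_nonneg hTT.le
    intro s hs
    apply mul_nonneg _ (hfnn s)
    have h1 : Tω - s ≤ 1 / (2*ω) := by rw [← hωT]; linarith [hs.1]
    have h2 : 2*ω*(Tω - s) ≤ 1 := by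
      rw [div_eq_inv_mul] at h1
      calc 2*ω*(Tω - s) ≤ 2*ω*((2*ω)⁻¹ * 1) := by
            apply mul_le_mul_of_nonneg_left _ (by positivity)
            simpa using h1
        _ = 1 := by field_simp
    nlinarith [Real.exp_pos (-2*ω*T)]
  -- final assembly
  have total : (∫ s in (0:ℝ)..Tω, ψ s * D s) - 2*ω*(∫ s in (0:ℝ)..Tω, ψ s * f s)
      ≥ - f 0 := by
    rw [← lin, split, ftc1, piece2, ftc2, hgT, hg0]
    linarith
  have h1 : x ⬝ᵥ Λ.mulVec x = ∫ s in (0:ℝ)..Tω, ψ s * f s := hbil x x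
  rw [h1]
  linarith [total, hfnn 0, hsum, hf0]

end aux

/-- Finite-dimensional version of Komornik's rapid stabilization theorem: if the
weighted Gramian `Λ_ω` is positive definite, then every solution of the closed-loop
system `v' = (-A - B Bᵀ Λ_ω⁻¹) v` decays like `M e^{-ωt} ‖v₀‖`. -/
theorem stmt_16 (n m : ℕ) (hn : 0 < n) (hm : 0 < m)
    (A : Matrix (Fin n) (Fin n) ℝ) (B : Matrix (Fin n) (Fin m) ℝ)
    (ω T : ℝ) (hω : 0 < ω) (hT : 0 < T)
    (Tω : ℝ) (hTω : Tω = T + 1 / (2 * ω))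
    (eω : ℝ → ℝ)
    (heω₁ : ∀ s ∈ Set.Icc (0 : ℝ) T, eω s = Real.exp (-2 * ω * s))
    (heω₂ : ∀ s ∈ Set.Icc T Tω, eω s = 2 * ω * Real.exp (-2 * ω * T) * (Tω - s))
    (Λ : Matrix (Fin n) (Fin n) ℝ)
    (hΛ : ∀ i j, Λ i j = ∫ s in (0 : ℝ)..Tω,
        eω s * ((NormedSpace.exp (s • A) * B * Bᵀ * NormedSpace.exp (s • Aᵀ)) i j))
    (hpos : Λ.PosDef) :
    ∃ M > (0 : ℝ), ∀ v : ℝ → (Fin n → ℝ),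
      (∀ t : ℝ, HasDerivAt v ((-A - B * Bᵀ * Λ⁻¹).mulVec (v t)) t) →
      ∀ t : ℝ, 0 ≤ t → ‖v t‖ ≤ M * Real.exp (-ω * t) * ‖v 0‖ := by
  classical
  have hdet : IsUnit Λ.det := hpos.det_pos.ne'.isUnit
  set Q := Λ⁻¹ with hQdef
  have hQpos : Q.PosDef := hpos.inv
  have hΛQ : Λ * Q = 1 := Matrix.mul_nonsing_inv Λ hdet
  have hQΛ : Q * Λ = 1 := Matrix.nonsing_inv_mul Λ hdet
  have hΛsym : Λᵀ = Λ := by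
    have h := hpos.1
    ext i j
    calc Λᵀ i j = Λ j i := rfl
      _ = star (Λ j i) := (star_trivial _).symm
      _ = Λᴴ i j := rfl
      _ = Λ i j := by rw [h]
  have hQsym : Qᵀ = Q := by
    have h := hQpos.1
    ext i j
    calc Qᵀ i j = Q j i := rfl
      _ = star (Q j i) := (star_trivial _).symm
      _ = Qᴴ i j := rfl
      _ = Q i j := by rw [h]
  -- transpose trick for quadratic forms
  have htr : ∀ (M : Matrix (Fin n) (Fin n) ℝ) (a b : Fin n → ℝ),
      a ⬝ᵥ M.mulVec b = b ⬝ᵥ Mᵀ.mulVec a := by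
    intro M a b
    rw [Matrix.dotProduct_mulVec, ← Matrix.mulVec_transpose, dotProduct_comm]
  -- the quadratic form of Q and its min/max on the unit sphere
  set φ : (Fin n → ℝ) → ℝ := fun y => y ⬝ᵥ Q.mulVec y with hφdef
  have hφc : Continuous φ := by
    show Continuous fun y : Fin n → ℝ => ∑ i, y i * ∑ j, Q i j * y j
    exact continuous_finset_sum _ fun i _ => (continuous_apply i).mul
      (continuous_finset_sum _ fun j _ => continuous_const.mul (continuous_apply j))
  haveI : Nonempty (Fin n) := ⟨⟨0, hn⟩⟩
  have hS : (Metric.sphere (0 : Fin n → ℝ) 1).Nonempty := by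
    obtain ⟨y, hy⟩ := exists_norm_eq (Fin n → ℝ) (zero_le_one' ℝ)
    exact ⟨y, by simpa [mem_sphere_zero_iff_norm] using hy⟩
  obtain ⟨y₁, hy₁S, hmin⟩ := (isCompact_sphere (0 : Fin n → ℝ) 1).exists_isMinOn hS
    hφc.continuousOn
  obtain ⟨y₂, hy₂S, hmax⟩ := (isCompact_sphere (0 : Fin n → ℝ) 1).exists_isMaxOn hS
    hφc.continuousOn
  set c₁ := φ y₁ with hc₁def
  set c₂ := φ y₂ with hc₂def
  have hy₁n : ‖y₁‖ = 1 := mem_sphere_zero_iff_norm.mp hy₁S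
  have hc₁ : 0 < c₁ := by
    have hne : y₁ ≠ 0 := fun h => by simp [h] at hy₁n
    have := hQpos.dotProduct_mulVec_pos hne
    simpa [hφdef, star_trivial] using this
  have hc₁₂ : c₁ ≤ c₂ := hmin hy₂S
  have hc₂ : 0 < c₂ := hc₁.trans_le hc₁₂
  have hscale : ∀ (a : ℝ) (z : Fin n → ℝ), φ (a • z) = a ^ 2 * φ z := by
    intro a z
    simp only [hφdef, Matrix.mulVec_smul, smul_dotProduct, dotProduct_smul, smul_eq_mul]
    ring
  have hbound : ∀ y : Fin n → ℝ, c₁ * ‖y‖ ^ 2 ≤ φ y ∧ φ y ≤ c₂ * ‖y‖ ^ 2 := by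
    intro y
    rcases eq_or_ne y 0 with rfl | hy
    · simp [hφdef]
    · have hny : (0:ℝ) < ‖y‖ := norm_pos_iff.mpr hy
      set z := ‖y‖⁻¹ • y with hzdef
      have hz : ‖z‖ = 1 := by
        rw [hzdef, norm_smul, norm_inv, norm_norm, inv_mul_cancel₀ hny.ne']
      have hzS : z ∈ Metric.sphere (0 : Fin n → ℝ) 1 := mem_sphere_zero_iff_norm.mpr hz
      have hyz : y = ‖y‖ • z := by
        rw [hzdef, smul_smul, mul_inv_cancel₀ hny.ne', one_smul]
      have h1 : c₁ ≤ φ z := hmin hzS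
      have h2 : φ z ≤ c₂ := hmax hzS
      have hphiy : φ y = ‖y‖ ^ 2 * φ z := by
        conv_lhs => rw [hyz]
        exact hscale _ _
      constructor
      · nlinarith
      · nlinarith
  -- the main estimate
  refine ⟨Real.sqrt (c₂ / c₁), Real.sqrt_pos.mpr (div_pos hc₂ hc₁), ?_⟩
  intro v hv t ht
  set w : ℝ → Fin n → ℝ := fun t => (-A - B * Bᵀ * Q).mulVec (v t) with hwdef
  set V : ℝ → ℝ := fun t => v t ⬝ᵥ Q.mulVec (v t) with hVdef
  have hVd : ∀ t, HasDerivAt V (w t ⬝ᵥ Q.mulVec (v t) + v t ⬝ᵥ Q.mulVec (w t)) t :=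
    fun t => aux_deriv_dot Q v (w t) t (hv t)
  have hV' : ∀ t, w t ⬝ᵥ Q.mulVec (v t) + v t ⬝ᵥ Q.mulVec (w t) ≤ -(2 * ω) * V t := by
    intro t
    set u := Q.mulVec (v t) with hudef
    have hvu : Λ.mulVec u = v t := by
      rw [hudef, Matrix.mulVec_mulVec, hΛQ, Matrix.one_mulVec]
    have key := aux_key A B ω T hω hT Tω hTω eω heω₁ heω₂ Λ hΛ u
    -- symmetrize
    have hsymq : u ⬝ᵥ (Λ * Aᵀ).mulVec u = u ⬝ᵥ (A * Λ).mulVec u := by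
      rw [htr (Λ * Aᵀ) u u, Matrix.transpose_mul, Matrix.transpose_transpose, hΛsym]
    have hVt : V t = u ⬝ᵥ Λ.mulVec u := by
      rw [hVdef]
      dsimp only
      rw [← hudef, ← hvu, dotProduct_comm]
    -- compute the derivative
    have hqw : v t ⬝ᵥ Q.mulVec (w t) = u ⬝ᵥ w t := by
      rw [htr Q (v t) (w t), hQsym, ← hudef, dotProduct_comm]
    have hwq : w t ⬝ᵥ Q.mulVec (v t) = u ⬝ᵥ w t := by
      rw [← hudef, dotProduct_comm]
    have huw : u ⬝ᵥ w t = -(u ⬝ᵥ (A * Λ).mulVec u) - u ⬝ᵥ (B * Bᵀ).mulVec u := by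
      rw [hwdef]
      dsimp only
      rw [Matrix.sub_mulVec, Matrix.neg_mulVec, dotProduct_sub, dotProduct_neg]
      congr 1
      · congr 1
        rw [← hvu, Matrix.mulVec_mulVec]
      · rw [← Matrix.mulVec_mulVec, ← hudef, ← Matrix.mulVec_mulVec]
    rw [hqw, hwq, huw, hVt]
    rw [hsymq] at key
    linarith
  -- Gronwall via monotonicity
  set W : ℝ → ℝ := fun t => Real.exp (2 * ω * t) * V t with hWdef
  have hWd : ∀ t, HasDerivAt W
      (Real.exp (2 * ω * t) * (2 * ω * V t
        + (w t ⬝ᵥ Q.mulVec (v t) + v t ⬝ᵥ Q.mulVec (w t)))) t := by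
    intro t
    have hexp : HasDerivAt (fun t : ℝ => Real.exp (2 * ω * t)) (Real.exp (2 * ω * t) * (2 * ω)) t := by
      have h0 : HasDerivAt (fun t : ℝ => 2 * ω * t) (2 * ω) t := by
        simpa using (hasDerivAt_id t).const_mul (2 * ω)
      simpa [mul_comm] using h0.exp
    have := hexp.mul (hVd t)
    refine this.congr_deriv ?_
    ring
  have hmono : Antitone W := by
    apply antitone_of_hasDerivAt_nonpos hWd
    intro t
    have h1 := hV' t
    have h2 := Real.exp_pos (2 * ω * t)
    have h3 : 2 * ω * V t + (w t ⬝ᵥ Q.mulVec (v t) + v t ⬝ᵥ Q.mulVec (w t)) ≤ 0 := by linarith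
    exact mul_nonpos_of_nonneg_of_nonpos h2.le h3
  have hW0 : W 0 = V 0 := by simp [hWdef]
  have hVt_le : V t ≤ Real.exp (-(2 * ω * t)) * V 0 := by
    have h5 : Real.exp (2 * ω * t) * V t ≤ V 0 := by
      have := hmono ht
      rwa [hW0] at this
    have h6 := mul_le_mul_of_nonneg_left h5 (Real.exp_nonneg (-(2 * ω * t)))
    calc V t = Real.exp (-(2 * ω * t)) * (Real.exp (2 * ω * t) * V t) := by
          rw [← mul_assoc, ← Real.exp_add]; simp
      _ ≤ Real.exp (-(2 * ω * t)) * V 0 := h6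
  -- norm estimates
  have hlow := (hbound (v t)).1
  have hup := (hbound (v 0)).2
  have hVlow : c₁ * ‖v t‖ ^ 2 ≤ V t := hlow
  have hVup : V 0 ≤ c₂ * ‖v 0‖ ^ 2 := hup
  have hchain : c₁ * ‖v t‖ ^ 2 ≤ Real.exp (-(2 * ω * t)) * (c₂ * ‖v 0‖ ^ 2) := by
    calc c₁ * ‖v t‖ ^ 2 ≤ V t := hVlow
      _ ≤ Real.exp (-(2 * ω * t)) * V 0 := hVt_le
      _ ≤ Real.exp (-(2 * ω * t)) * (c₂ * ‖v 0‖ ^ 2) :=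
          mul_le_mul_of_nonneg_left hVup (Real.exp_nonneg _)
  have hexp2 : Real.exp (-ω * t) ^ 2 = Real.exp (-(2 * ω * t)) := by
    rw [sq, ← Real.exp_add]; ring_nf
  have hsq : ‖v t‖ ^ 2 ≤ (Real.sqrt (c₂ / c₁) * Real.exp (-ω * t) * ‖v 0‖) ^ 2 := by
    have hrw : (Real.sqrt (c₂ / c₁) * Real.exp (-ω * t) * ‖v 0‖) ^ 2
        = (c₂ / c₁) * (Real.exp (-(2 * ω * t)) * ‖v 0‖ ^ 2) := by
      rw [mul_pow, mul_pow, Real.sq_sqrt (div_pos hc₂ hc₁).le, hexp2]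
      ring
    rw [hrw]
    rw [div_mul_eq_mul_div, le_div_iff₀ hc₁]
    nlinarith
  calc ‖v t‖ = Real.sqrt (‖v t‖ ^ 2) := (Real.sqrt_sq (norm_nonneg _)).symm
    _ ≤ Real.sqrt ((Real.sqrt (c₂ / c₁) * Real.exp (-ω * t) * ‖v 0‖) ^ 2) :=
        Real.sqrt_le_sqrt hsq
    _ = Real.sqrt (c₂ / c₁) * Real.exp (-ω * t) * ‖v 0‖ :=
        Real.sqrt_sq (by positivity)
end
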